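/- arXiv:1101.3967 — 6 statements merged into one kernel-verified Lean document; each statement's English description precedes it below -/
import Mathlib

section
/- Let n ≥ 1, α ≥ 1, and let g be a locally square integrable function on (0,∞)×ℝⁿ. If there is C ≥ 0 such that for every open ball B ⊂ ℝⁿ one has ∫_{T_α B} |g(t,y)|² dy dt/t ≤ C² |B|/αⁿ, then for every open ball B ⊂ ℝⁿ one has ∫_{T_1 B} |g(t,y)|² dy dt/t ≤ C² |B|. In other words, ‖g‖_{T^{∞,2}_1} ≤ ‖g‖_{T^{∞,2}_α}. -/
open MeasureTheory Metric Set Filter ENNReal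

noncomputable section

/-- `ℝⁿ` as a Euclidean space. -/
abbrev En (n : ℕ) : Type := EuclideanSpace ℝ (Fin n)

/-- `g` is (measurable and) locally square integrable on `(0,∞) × ℝⁿ`. -/
def LocSqInt (n : ℕ) (g : ℝ → En n → ℝ) : Prop :=
  Measurable (Function.uncurry g) ∧
  LocallyIntegrableOn (fun q : ℝ × En n => (g q.1 q.2) ^ 2)
    (Set.Ioi (0 : ℝ) ×ˢ (Set.univ : Set (En n)))

/-- The conical square function `A^{(α)} g (x)` of aperture `α`, with values in `[0,∞]`. -/
def conicalSq (n : ℕ) (α : ℝ) (g : ℝ → En n → ℝ) (x : En n) : ℝ≥0∞ :=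
  (∫⁻ t in Set.Ioi (0 : ℝ), ∫⁻ y,
      (ball x (α * t)).indicator (fun y => ENNReal.ofReal (|g t y| ^ 2 / t ^ (n + 1))) y) ^
    (1 / 2 : ℝ)

/-- The tent space quasi-norm `‖g‖_{T^{p,2}_α} = ‖A^{(α)} g‖_{L^p(ℝⁿ)}`, with values in `[0,∞]`. -/
def tentNorm (n : ℕ) (p α : ℝ) (g : ℝ → En n → ℝ) : ℝ≥0∞ :=
  (∫⁻ x, conicalSq n α g x ^ p) ^ (1 / p)

/-- The vertical square function `V g (x)`. -/
def vertSq (n : ℕ) (g : ℝ → En n → ℝ) (x : En n) : ℝ≥0∞ :=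
  (∫⁻ t in Set.Ioi (0 : ℝ), ENNReal.ofReal (|g t x| ^ 2 / t)) ^ (1 / 2 : ℝ)

/-- `‖V g‖_{L^p(ℝⁿ)}`, with values in `[0,∞]`. -/
def vertNorm (n : ℕ) (p : ℝ) (g : ℝ → En n → ℝ) : ℝ≥0∞ :=
  (∫⁻ x, vertSq n g x ^ p) ^ (1 / p)

/-- The tent `T_α B` of aperture `α` above the ball `B = B(x,r)`. -/
def tent (n : ℕ) (α : ℝ) (x : En n) (r : ℝ) : Set (ℝ × En n) :=
  {q | 0 < q.1 ∧ q.1 < r / α ∧ q.2 ∈ ball x (r - α * q.1)}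

/-- `∫_{T_α B} |g(t,y)|² dy dt / t`. -/
def tentIntegral (n : ℕ) (α : ℝ) (g : ℝ → En n → ℝ) (x : En n) (r : ℝ) : ℝ≥0∞ :=
  ∫⁻ q in tent n α x r, ENNReal.ofReal (|g q.1 q.2| ^ 2 / q.1)

/-- A `T^{p,2}_α`-atom associated with the ball `B(x,r)`: it is supported in the tent
`T_α B(x,r)` and satisfies `∫_{T_α B} |a|² dy dt/t ≤ α^{-n} |B|^{-(2/p - 1)}`. -/
def IsTentAtom (n : ℕ) (p α : ℝ) (a : ℝ → En n → ℝ) (x : En n) (r : ℝ) : Prop :=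
  (∀ t y, (t, y) ∉ tent n α x r → a t y = 0) ∧
  tentIntegral n α a x r ≤
    ENNReal.ofReal (α ^ (-(n : ℝ))) * volume (ball x r) ^ (-(2 / p - 1))

/-- The grand square function `G_λ g (x)` with exponent `nλ`. -/
def grandSq (n : ℕ) (l : ℝ) (g : ℝ → En n → ℝ) (x : En n) : ℝ≥0∞ :=
  (∫⁻ t in Set.Ioi (0 : ℝ), ∫⁻ y,
      ENNReal.ofReal ((t / (dist x y + t)) ^ ((n : ℝ) * l) * |g t y| ^ 2 / t ^ (n + 1))) ^
    (1 / 2 : ℝ)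

/-- If `∫_{T_α B} |g|² dy dt/t ≤ C² |B|/αⁿ` for every ball `B`, then
`∫_{T_1 B} |g|² dy dt/t ≤ C² |B|` for every ball `B`; i.e.
`‖g‖_{T^{∞,2}_1} ≤ ‖g‖_{T^{∞,2}_α}`. -/
theorem statement6 (n : ℕ) (hn : 1 ≤ n) (α : ℝ) (hα : 1 ≤ α)
    (g : ℝ → En n → ℝ) (hg : LocSqInt n g) (C : ℝ) (hC : 0 ≤ C)
    (h : ∀ (x : En n) (r : ℝ), 0 < r →
      tentIntegral n α g x r ≤
        ENNReal.ofReal (C ^ 2) * (volume (ball x r) / ENNReal.ofReal (α ^ (n : ℝ)))) :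
    ∀ (x : En n) (r : ℝ), 0 < r →
      tentIntegral n 1 g x r ≤ ENNReal.ofReal (C ^ 2) * volume (ball x r) := by
  intro x r hr
  have hα0 : (0 : ℝ) < α := lt_of_lt_of_le one_pos hα
  -- tent of aperture 1 over B(x,r) is contained in tent of aperture α over B(x, α r)
  have hsub : tent n 1 x r ⊆ tent n α x (α * r) := by
    rintro ⟨t, y⟩ ⟨ht0, htr, hy⟩
    simp only [one_mul] at htr hy
    refine ⟨ht0, ?_, ?_⟩
    · simpa [mul_div_cancel_left₀ r hα0.ne'] using htr
    · refine mem_ball.mpr (lt_of_lt_of_le (mem_ball.mp hy) ?_)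
      nlinarith [mem_ball.mp hy, dist_nonneg (x := y) (y := x)]
  have h1 : tentIntegral n 1 g x r ≤ tentIntegral n α g x (α * r) :=
    lintegral_mono_set hsub
  have h2 := h x (α * r) (by positivity)
  refine h1.trans (h2.trans ?_)
  -- volume scaling
  have hball : volume (ball x (α * r)) =
      ENNReal.ofReal (α ^ (n : ℝ)) * volume (ball x r) := by
    haveI : NeZero n := ⟨by omega⟩
    rw [Measure.addHaar_ball _ _ (by positivity : (0:ℝ) ≤ α * r),
        Measure.addHaar_ball _ _ hr.le]
    simp only [finrank_euclideanSpace, Fintype.card_fin, mul_pow,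
      ENNReal.ofReal_mul (by positivity : (0:ℝ) ≤ α ^ n), Real.rpow_natCast]
    ring
  rw [hball]
  have hαn : ENNReal.ofReal (α ^ (n : ℝ)) ≠ 0 := by
    simp [Real.rpow_natCast]; positivity
  have hαn' : ENNReal.ofReal (α ^ (n : ℝ)) ≠ ⊤ := ENNReal.ofReal_ne_top
  rw [mul_comm (ENNReal.ofReal (α ^ (n : ℝ))), mul_div_assoc,
      ENNReal.div_self hαn hαn', mul_one]

end
end

section
/- Let n ≥ 1 and 0 < p ≤ 2. There is a constant C > 0 depending only on n and p such that for every locally square integrable function g on (0,∞)×ℝⁿ, ‖Vg‖_{L^p(ℝⁿ)} ≤ C ‖g‖_{T^{p,2}_1}. -/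
open MeasureTheory Metric Set Filter ENNReal

noncomputable section

/-! Write `f = (V g)²`, `h = (A g)²`, `q = p / 2 ≤ 1` and `c = |B(0,1)|`, so `|B(x,t)| = c tⁿ`.
By Fubini, `c ∫_F f = ∫∫_{x ∈ F} |g(t,x)|² t⁻ⁿ⁻¹ |B(x,t)| dx dt` while
`∫_G h = ∫∫ |g(t,y)|² t⁻ⁿ⁻¹ |B(y,t) ∩ G| dy dt`. Hence `c ∫_F f ≤ 2 ∫_G h` as soon as every ball
centred in `F` meets `G` in at least half its measure; `F = G = ℝⁿ` gives the case `p = 2`.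

For `p < 2` and a level `b`, take `G = Oᶜ` with `O = {h > b}`, and `F` the complement of the set
`O*` of centres of balls more than half filled by `O`. The Vitali covering lemma gives
`|O*| ≤ 2·4ⁿ |O|`, and Chebyshev's inequality on `F` then gives the good-λ inequality
`|{f > b}| ≤ 2·4ⁿ |{h > b}| + 2 (c b)⁻¹ ∫_{h ≤ b} h`. Integrating it against `d(b^q)` bounds
`∫ f^q` by `∫ h^q`: the last term contributes `∫ h ∫_{b ≥ h} q b^{q-2} db = q/(1-q) ∫ h^q`,
which is finite because `q < 1`. -/

open Function Module Topology

section GoodLambda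

variable {α : Type*} [MeasurableSpace α] {μ : Measure α}

theorem lintegral_eq_lintegral_meas_ofReal_lt [SFinite μ] {f : α → ℝ≥0∞} (hf : Measurable f) :
    ∫⁻ x, f x ∂μ = ∫⁻ s in Ioi 0, μ {x | ENNReal.ofReal s < f x} := by
  set S : Set (ℝ × α) := {p | ENNReal.ofReal p.1 < f p.2}
  have hS : MeasurableSet S := measurableSet_lt (by fun_prop) (hf.comp measurable_snd)
  have hslice : ∀ a : ℝ≥0∞, volume.restrict (Ioi 0) {s : ℝ | ENNReal.ofReal s < a} = a := by
    intro a
    rcases eq_or_ne a ⊤ with rfl | ha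
    · simp
    have : {s : ℝ | ENNReal.ofReal s < a} ∩ Ioi 0 = Ioo 0 a.toReal := by
      ext s
      simp only [mem_inter_iff, mem_ofPred_eq, mem_Ioi, mem_Ioo]
      exact ⟨fun ⟨h, hs⟩ => ⟨hs, (ofReal_lt_iff_lt_toReal hs.le ha).1 h⟩,
        fun ⟨hs, h⟩ => ⟨(ofReal_lt_iff_lt_toReal hs.le ha).2 h, hs⟩⟩
    rw [Measure.restrict_apply (measurableSet_lt (by fun_prop) measurable_const), this,
      Real.volume_Ioo, sub_zero, ofReal_toReal ha]
  calc ∫⁻ x, f x ∂μ = ∫⁻ x, volume.restrict (Ioi 0) ((fun s => (s, x)) ⁻¹' S) ∂μ :=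
        lintegral_congr fun x => (hslice (f x)).symm
    _ = ((volume.restrict (Ioi 0)).prod μ) S := (Measure.prod_apply_symm hS).symm
    _ = ∫⁻ s in Ioi 0, μ {x | ENNReal.ofReal s < f x} := Measure.prod_apply hS

lemma ofReal_lt_rpow_iff {a : ℝ≥0∞} {q s : ℝ} (hq : 0 < q) (hs : 0 ≤ s) :
    ENNReal.ofReal s < a ^ q ↔ ENNReal.ofReal (s ^ q⁻¹) < a := by
  have : ENNReal.ofReal s = ENNReal.ofReal (s ^ q⁻¹) ^ q := by
    rw [ENNReal.ofReal_rpow_of_nonneg (by positivity) hq.le, Real.rpow_inv_rpow hs hq.ne']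
  rw [this, ENNReal.rpow_lt_rpow_iff hq]

lemma lintegral_Ioi_rpow_neg_inv_mul {q : ℝ} (hq : 0 < q) (hq1 : q < 1) {c : ℝ} (hc : 0 < c) :
    ∫⁻ s in Ioi (c ^ q), ENNReal.ofReal (s ^ (-q⁻¹) * c) =
      ENNReal.ofReal (q / (1 - q)) * ENNReal.ofReal c ^ q := by
  have hcq : 0 < c ^ q := Real.rpow_pos_of_pos hc q
  have hexp : -q⁻¹ < -1 := neg_lt_neg ((one_lt_inv₀ hq).2 hq1)
  have h1q : 0 < 1 - q := by linarith
  rw [← ofReal_integral_eq_lintegral_ofReal ((integrableOn_Ioi_rpow_of_lt hexp hcq).mul_const c)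
      (ae_restrict_of_forall_mem measurableSet_Ioi fun s (hs : c ^ q < s) =>
        mul_nonneg (Real.rpow_nonneg (hcq.trans hs).le _) hc.le),
    integral_mul_const, integral_Ioi_rpow_of_lt hexp hcq, ENNReal.ofReal_rpow_of_nonneg hc.le hq.le,
    ← ENNReal.ofReal_mul (by positivity), ← Real.rpow_mul hc.le,
    show q * (-q⁻¹ + 1) = q - 1 by field_simp; ring, Real.rpow_sub hc, Real.rpow_one]
  have : -1 + q ≠ 0 := by linarith
  congr 1
  field_simp
  ring

lemma lintegral_inv_rpow_inv_mul_ite_le {q : ℝ} (hq : 0 < q) (hq1 : q < 1) (a : ℝ≥0∞) :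
    ∫⁻ s in Ioi 0, (ENNReal.ofReal (s ^ q⁻¹))⁻¹ * (if a ≤ ENNReal.ofReal (s ^ q⁻¹) then a else 0)
      ≤ ENNReal.ofReal (q / (1 - q)) * a ^ q := by
  rcases eq_or_ne a ⊤ with rfl | ha
  · simp
  obtain ⟨c, hc, rfl⟩ : ∃ c : ℝ, 0 ≤ c ∧ ENNReal.ofReal c = a :=
    ⟨a.toReal, toReal_nonneg, ofReal_toReal ha⟩
  rcases hc.eq_or_lt with rfl | hc
  · simp
  have hint : ∀ s ∈ Ioi (0 : ℝ),
      (ENNReal.ofReal (s ^ q⁻¹))⁻¹ *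
          (if ENNReal.ofReal c ≤ ENNReal.ofReal (s ^ q⁻¹) then ENNReal.ofReal c else 0) =
        (Ici (c ^ q)).indicator (fun s => ENNReal.ofReal (s ^ (-q⁻¹) * c)) s := by
    intro s (hs : 0 < s)
    have hlevel : ENNReal.ofReal c ≤ ENNReal.ofReal (s ^ q⁻¹) ↔ c ^ q ≤ s := by
      rw [← not_lt, ← ofReal_lt_rpow_iff hq hs.le, not_lt,
        ENNReal.ofReal_rpow_of_nonneg hc.le hq.le, ofReal_le_ofReal_iff hs.le]
    by_cases hcs : c ^ q ≤ s
    · rw [if_pos (hlevel.2 hcs), indicator_of_mem (mem_Ici.2 hcs), Real.rpow_neg hs.le,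
        ENNReal.ofReal_mul (by positivity), ENNReal.ofReal_inv_of_pos (by positivity)]
    · rw [if_neg (mt hlevel.1 hcs), indicator_of_notMem (mt mem_Ici.1 hcs), mul_zero]
  rw [setLIntegral_congr_fun measurableSet_Ioi hint, lintegral_indicator measurableSet_Ici,
    Measure.restrict_restrict measurableSet_Ici,
    inter_eq_left.2 (Ici_subset_Ioi.2 (Real.rpow_pos_of_pos hc q)),
    ← setLIntegral_congr Ioi_ae_eq_Ici, lintegral_Ioi_rpow_neg_inv_mul hq hq1 hc]

theorem lintegral_rpow_le_of_goodLambda [SFinite μ] {f h : α → ℝ≥0∞} (hf : Measurable f)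
    (hh : Measurable h) {C D : ℝ≥0∞}
    (hfh : ∀ b : ℝ≥0∞, b ≠ 0 → b ≠ ⊤ →
      μ {x | b < f x} ≤ C * μ {x | b < h x} + D * b⁻¹ * ∫⁻ x in {x | h x ≤ b}, h x ∂μ)
    {q : ℝ} (hq : 0 < q) (hq1 : q < 1) :
    ∫⁻ x, f x ^ q ∂μ ≤ (C + D * ENNReal.ofReal (q / (1 - q))) * ∫⁻ x, h x ^ q ∂μ := by
  set b : ℝ → ℝ≥0∞ := fun s => ENNReal.ofReal (s ^ q⁻¹)
  set G : ℝ × α → ℝ≥0∞ := fun p => (b p.1)⁻¹ * (if h p.2 ≤ b p.1 then h p.2 else 0)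
  have hG : Measurable G :=
    (measurable_fst.pow_const _).ennreal_ofReal.inv.mul <| Measurable.ite
      (measurableSet_le (hh.comp measurable_snd) (measurable_fst.pow_const _).ennreal_ofReal)
      (hh.comp measurable_snd) measurable_const
  have hlevel (u : α → ℝ≥0∞) {s : ℝ} (hs : 0 ≤ s) :
      {x | ENNReal.ofReal s < u x ^ q} = {x | b s < u x} := by
    ext x
    exact ofReal_lt_rpow_iff hq hs
  have hlayer : ∀ s ∈ Ioi (0 : ℝ), μ {x | ENNReal.ofReal s < f x ^ q} ≤
      C * μ {x | ENNReal.ofReal s < h x ^ q} + D * ∫⁻ x, G (s, x) ∂μ := by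
    intro s (hs : 0 < s)
    have hb0 : b s ≠ 0 := (ENNReal.ofReal_pos.2 (Real.rpow_pos_of_pos hs _)).ne'
    have hG_s : ∫⁻ x, G (s, x) ∂μ = (b s)⁻¹ * ∫⁻ x in {x | h x ≤ b s}, h x ∂μ := by
      rw [← lintegral_indicator (measurableSet_le hh measurable_const),
        ← lintegral_const_mul' _ _ (ENNReal.inv_ne_top.2 hb0)]
      refine lintegral_congr fun x => ?_
      simp only [G, indicator_apply, mem_ofPred_eq]
    rw [hlevel f hs.le, hlevel h hs.le, hG_s, ← mul_assoc]
    exact hfh (b s) hb0 ofReal_ne_top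
  have hanti : Antitone fun s : ℝ => μ {x | ENNReal.ofReal s < h x ^ q} :=
    fun s t hst => measure_mono fun x hx => (ENNReal.ofReal_le_ofReal hst).trans_lt hx
  calc ∫⁻ x, f x ^ q ∂μ = ∫⁻ s in Ioi 0, μ {x | ENNReal.ofReal s < f x ^ q} :=
        lintegral_eq_lintegral_meas_ofReal_lt (hf.pow_const q)
    _ ≤ ∫⁻ s in Ioi 0, (C * μ {x | ENNReal.ofReal s < h x ^ q} + D * ∫⁻ x, G (s, x) ∂μ) :=
        setLIntegral_mono' measurableSet_Ioi hlayer
    _ = C * ∫⁻ x, h x ^ q ∂μ + D * ∫⁻ x, (∫⁻ s in Ioi 0, G (s, x)) ∂μ := by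
        rw [lintegral_add_right _ (hG.lintegral_prod_right'.const_mul D),
          lintegral_const_mul _ hanti.measurable, lintegral_const_mul _ hG.lintegral_prod_right',
          lintegral_lintegral_swap hG.aemeasurable,
          ← lintegral_eq_lintegral_meas_ofReal_lt (hh.pow_const q)]
    _ ≤ C * ∫⁻ x, h x ^ q ∂μ + D * ∫⁻ x, ENNReal.ofReal (q / (1 - q)) * h x ^ q ∂μ := by
        gcongr with x
        exact lintegral_inv_rpow_inv_mul_ite_le hq hq1 (h x)
    _ = (C + D * ENNReal.ofReal (q / (1 - q))) * ∫⁻ x, h x ^ q ∂μ := by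
        rw [lintegral_const_mul _ (hh.pow_const q)]
        ring

end GoodLambda

section HighDensity

variable {X : Type*} [MetricSpace X] [MeasurableSpace X] (μ : Measure X)

/-- The level set `{M 1_O > 1/2}` of the centred maximal function of `1_O`. -/
def highDensitySet (O : Set X) : Set X :=
  {y | ∃ t > 0, μ (closedBall y t) < 2 * μ (O ∩ closedBall y t)}

@[simp]
lemma highDensitySet_empty : highDensitySet μ ∅ = ∅ := by
  simp [highDensitySet]

lemma isOpen_highDensitySet [ProperSpace X] [OpensMeasurableSpace X] [IsFiniteMeasureOnCompacts μ]
    (O : Set X) : IsOpen (highDensitySet μ O) := by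
  rw [Metric.isOpen_iff]
  rintro y ⟨t, ht, hdense⟩
  have hlim : Tendsto (fun s => μ (closedBall y s)) (𝓝[>] t) (𝓝 (μ (closedBall y t))) := by
    rw [← biInter_gt_closedBall y t]
    exact tendsto_measure_biInter_gt (fun _ _ => measurableSet_closedBall.nullMeasurableSet)
      (fun _ _ _ hij => closedBall_subset_closedBall hij)
      ⟨t + 1, by linarith, measure_closedBall_lt_top.ne⟩
  obtain ⟨s, hs, hts : t < s⟩ :=
    ((hlim.eventually (gt_mem_nhds hdense)).and self_mem_nhdsWithin).exists
  refine ⟨(s - t) / 2, by linarith, fun y' hy' => ⟨t + (s - t) / 2, by linarith, ?_⟩⟩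
  have hy'y : dist y' y < (s - t) / 2 := hy'
  calc μ (closedBall y' (t + (s - t) / 2)) ≤ μ (closedBall y s) :=
        measure_mono (closedBall_subset_closedBall' (by linarith))
    _ < 2 * μ (O ∩ closedBall y t) := hs
    _ ≤ 2 * μ (O ∩ closedBall y' (t + (s - t) / 2)) := by
        gcongr
        exact closedBall_subset_closedBall' (by rw [dist_comm]; linarith)

variable {E : Type*} [NormedAddCommGroup E] [NormedSpace ℝ E] [MeasurableSpace E] [BorelSpace E]
  [FiniteDimensional ℝ E] [Nontrivial E] (μ : Measure E) [μ.IsAddHaarMeasure]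

lemma exists_forall_le_of_measure_closedBall_le {M : ℝ≥0∞} (hM : M ≠ ⊤) :
    ∃ R : ℝ, ∀ y r, μ (closedBall y r) ≤ M → r ≤ R := by
  have hlim : Tendsto (fun N : ℕ => μ (closedBall (0 : E) N)) atTop (𝓝 ⊤) := by
    have := tendsto_measure_iUnion_atTop (μ := μ)
      (fun i j hij => closedBall_subset_closedBall (Nat.cast_le.2 hij) :
        Monotone fun N : ℕ => closedBall (0 : E) N)
    rwa [iUnion_closedBall_nat, measure_univ_of_isAddLeftInvariant] at this
  obtain ⟨N, hN⟩ := (hlim.eventually (lt_mem_nhds hM.lt_top)).exists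
  refine ⟨N, fun y r hr => ?_⟩
  by_contra! hNr
  have := (measure_mono (μ := μ) (closedBall_subset_closedBall hNr.le)).trans hr
  rw [Measure.addHaar_closedBall_center] at this
  exact (hN.trans_le this).false

theorem measure_highDensitySet_le {O : Set E} (hO : MeasurableSet O) :
    μ (highDensitySet μ O) ≤ 2 * 4 ^ finrank ℝ E * μ O := by
  rcases eq_or_ne (μ O) ⊤ with hO' | hO'
  · simp [hO']
  choose! r hr_pos hr_dense using fun y (hy : y ∈ highDensitySet μ O) => hy
  obtain ⟨R, hR⟩ := exists_forall_le_of_measure_closedBall_le μ (M := 2 * μ O) (by finiteness)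
  have hrR : ∀ y ∈ highDensitySet μ O, r y ≤ R := fun y hy =>
    hR y _ ((hr_dense y hy).le.trans (by gcongr; exact inter_subset_left))
  obtain ⟨u, hu, hdisj, hcover⟩ := Vitali.exists_disjoint_subfamily_covering_enlargement_closedBall
    _ id r R hrR 4 (by norm_num)
  simp only [id] at hdisj hcover
  have hu_count : u.Countable :=
    (hdisj.mono fun _ => ball_subset_closedBall).countable_of_isOpen (fun _ _ => isOpen_ball)
      fun a ha => ⟨a, mem_ball_self (hr_pos a (hu ha))⟩
  calc μ (highDensitySet μ O) ≤ μ (⋃ b ∈ u, closedBall b (4 * r b)) := measure_mono fun y hy => by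
        obtain ⟨b, hb, hyb⟩ := hcover y hy
        exact mem_biUnion hb (hyb (mem_closedBall_self (hr_pos y hy).le))
    _ ≤ ∑' b : u, μ (closedBall (b : E) (4 * r b)) := measure_biUnion_le μ hu_count _
    _ ≤ ∑' b : u, 2 * 4 ^ finrank ℝ E * μ (O ∩ closedBall (b : E) (r b)) := by
        refine ENNReal.tsum_le_tsum fun b => ?_
        have hb := hu b.2
        calc μ (closedBall (b : E) (4 * r b)) = 4 ^ finrank ℝ E * μ (closedBall (b : E) (r b)) := by
              rw [Measure.addHaar_closedBall_mul μ _ (by norm_num) (hr_pos _ hb).le,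
                Measure.addHaar_closedBall_center μ (b : E), ENNReal.ofReal_pow (by norm_num),
                ENNReal.ofReal_ofNat]
          _ ≤ 4 ^ finrank ℝ E * (2 * μ (O ∩ closedBall (b : E) (r b))) := by
              gcongr
              exact (hr_dense _ hb).le
          _ = 2 * 4 ^ finrank ℝ E * μ (O ∩ closedBall (b : E) (r b)) := by ring
    _ = 2 * 4 ^ finrank ℝ E * μ (⋃ b ∈ u, O ∩ closedBall b (r b)) := by
        rw [ENNReal.tsum_mul_left, measure_biUnion hu_count
          (hdisj.mono fun _ => inter_subset_right) fun b _ => hO.inter measurableSet_closedBall]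
    _ ≤ 2 * 4 ^ finrank ℝ E * μ O := by
        gcongr
        exact iUnion₂_subset fun _ _ => inter_subset_left

lemma measure_ball_le_two_mul_measure_inter_compl {O : Set E} (hO : MeasurableSet O) {x : E}
    (hx : x ∉ highDensitySet μ O) {t : ℝ} (ht : 0 < t) :
    μ (ball x t) ≤ 2 * μ (ball x t ∩ Oᶜ) := by
  have hdense : 2 * μ (ball x t ∩ O) ≤ μ (ball x t) := by
    have : 2 * μ (O ∩ closedBall x t) ≤ μ (closedBall x t) := not_lt.1 fun h => hx ⟨t, ht, h⟩
    have hsub : ball x t ∩ O ⊆ O ∩ closedBall x t := fun y hy => ⟨hy.2, ball_subset_closedBall hy.1⟩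
    rw [← Measure.addHaar_closedBall_eq_addHaar_ball]
    exact le_trans (by gcongr) this
  refine ENNReal.le_of_add_le_add_left (measure_ball_lt_top (μ := μ) (x := x) (r := t)).ne ?_
  calc μ (ball x t) + μ (ball x t) = 2 * μ (ball x t ∩ O) + 2 * μ (ball x t ∩ Oᶜ) := by
        rw [← two_mul, ← mul_add, ← sdiff_eq, measure_inter_add_sdiff _ hO]
    _ ≤ μ (ball x t) + 2 * μ (ball x t ∩ Oᶜ) := by gcongr

end HighDensity

section SquareFunctions

variable {X : Type*} [MeasurableSpace X]

/-- `(V g x)²`. -/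
def verticalEnergy (g : ℝ → X → ℝ) (x : X) : ℝ≥0∞ :=
  ∫⁻ t in Ioi 0, ENNReal.ofReal (|g t x| ^ 2 / t)

lemma measurable_verticalEnergy {g : ℝ → X → ℝ} (hg : Measurable (uncurry g)) :
    Measurable (verticalEnergy g) :=
  ((hg.abs.pow_const 2).div measurable_fst).ennreal_ofReal.comp measurable_swap
    |>.lintegral_prod_right'

lemma setLIntegral_verticalEnergy (μ : Measure X) [SFinite μ] {g : ℝ → X → ℝ}
    (hg : Measurable (uncurry g)) (D : Set X) :
    ∫⁻ x in D, verticalEnergy g x ∂μ =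
      ∫⁻ t in Ioi 0, ∫⁻ x in D, ENNReal.ofReal (|g t x| ^ 2 / t) ∂μ :=
  lintegral_lintegral_swap
    (((hg.abs.pow_const 2).div measurable_fst).ennreal_ofReal.comp measurable_swap).aemeasurable

lemma setLIntegral_lintegral_indicator_ball [PseudoMetricSpace X] [OpensMeasurableSpace X]
    [SecondCountableTopology X] (μ : Measure X) [SFinite μ] {w : X → ℝ≥0∞} (hw : Measurable w)
    (D : Set X) (t : ℝ) :
    ∫⁻ x in D, ∫⁻ y, (ball x t).indicator w y ∂μ ∂μ = ∫⁻ y, μ (ball y t ∩ D) * w y ∂μ := by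
  have hS : MeasurableSet {p : X × X | dist p.2 p.1 < t} :=
    measurableSet_lt (by fun_prop) measurable_const
  have hmeas : Measurable (uncurry fun x y => (ball x t).indicator w y) :=
    (hw.comp measurable_snd).indicator hS
  rw [lintegral_lintegral_swap hmeas.aemeasurable]
  refine lintegral_congr fun y => ?_
  calc ∫⁻ x in D, (ball x t).indicator w y ∂μ
      = ∫⁻ x in D, (ball y t).indicator (fun _ => w y) x ∂μ :=
        lintegral_congr fun x => by classical simp only [indicator_apply, mem_ball_comm]
    _ = μ (ball y t ∩ D) * w y := by
        rw [lintegral_indicator_const measurableSet_ball, Measure.restrict_apply measurableSet_ball,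
          mul_comm]

variable {E : Type*} [NormedAddCommGroup E] [NormedSpace ℝ E] [MeasurableSpace E] {g : ℝ → E → ℝ}

def coneDensity (g : ℝ → E → ℝ) (t : ℝ) (y : E) : ℝ≥0∞ :=
  ENNReal.ofReal (|g t y| ^ 2 / t ^ (finrank ℝ E + 1))

lemma measurable_coneDensity (hg : Measurable (uncurry g)) : Measurable (uncurry (coneDensity g)) :=
  ((hg.abs.pow_const 2).div (measurable_fst.pow_const _)).ennreal_ofReal

variable [BorelSpace E] [FiniteDimensional ℝ E] (μ : Measure E) [μ.IsAddHaarMeasure]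

/-- `(A g x)²`, for the cone of aperture one. -/
def conicalEnergy (g : ℝ → E → ℝ) (x : E) : ℝ≥0∞ :=
  ∫⁻ t in Ioi 0, ∫⁻ y, (ball x t).indicator (coneDensity g t) y ∂μ

lemma measurable_lintegral_indicator_ball_coneDensity (hg : Measurable (uncurry g)) :
    Measurable fun p : E × ℝ => ∫⁻ y, (ball p.1 p.2).indicator (coneDensity g p.2) y ∂μ := by
  have hS : MeasurableSet {q : (E × ℝ) × E | dist q.2 q.1.1 < q.1.2} :=
    measurableSet_lt (by fun_prop) (by fun_prop)
  exact ((measurable_coneDensity hg).comp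
    ((measurable_snd.comp measurable_fst).prodMk measurable_snd) |>.indicator hS)
    |>.lintegral_prod_right'

lemma measurable_conicalEnergy (hg : Measurable (uncurry g)) : Measurable (conicalEnergy μ g) :=
  (measurable_lintegral_indicator_ball_coneDensity μ hg).lintegral_prod_right'

lemma setLIntegral_conicalEnergy (hg : Measurable (uncurry g)) (D : Set E) :
    ∫⁻ x in D, conicalEnergy μ g x ∂μ =
      ∫⁻ t in Ioi 0, ∫⁻ y, μ (ball y t ∩ D) * coneDensity g t y ∂μ := by
  unfold conicalEnergy
  rw [lintegral_lintegral_swap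
    (measurable_lintegral_indicator_ball_coneDensity μ hg).aemeasurable]
  exact lintegral_congr fun t => setLIntegral_lintegral_indicator_ball μ
    ((measurable_coneDensity hg).comp measurable_prodMk_left) D t

variable [Nontrivial E]

lemma measure_ball_mul_coneDensity (g : ℝ → E → ℝ) {t : ℝ} (ht : 0 < t) (x : E) :
    μ (ball x t) * coneDensity g t x = μ (ball 0 1) * ENNReal.ofReal (|g t x| ^ 2 / t) := by
  rw [Measure.addHaar_ball μ x ht.le, coneDensity, mul_comm (ENNReal.ofReal _), mul_assoc,
    ← ENNReal.ofReal_mul (by positivity)]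
  congr 2
  field_simp
  ring

theorem setLIntegral_verticalEnergy_le (hg : Measurable (uncurry g)) {O : Set E}
    (hO : MeasurableSet O) :
    ∫⁻ x in (highDensitySet μ O)ᶜ, verticalEnergy g x ∂μ ≤
      2 * (μ (ball 0 1))⁻¹ * ∫⁻ x in Oᶜ, conicalEnergy μ g x ∂μ := by
  have hc : μ (ball (0 : E) 1) ≠ ⊤ := measure_ball_lt_top.ne
  have hF : MeasurableSet (highDensitySet μ O)ᶜ := (isOpen_highDensitySet μ O).measurableSet.compl
  have key : μ (ball 0 1) * ∫⁻ x in (highDensitySet μ O)ᶜ, verticalEnergy g x ∂μ ≤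
      2 * ∫⁻ x in Oᶜ, conicalEnergy μ g x ∂μ := by
    rw [setLIntegral_verticalEnergy μ hg, setLIntegral_conicalEnergy μ hg,
      ← lintegral_const_mul' _ _ hc, ← lintegral_const_mul' _ _ ofNat_ne_top]
    refine setLIntegral_mono' measurableSet_Ioi fun t (ht : 0 < t) => ?_
    calc μ (ball 0 1) * ∫⁻ x in (highDensitySet μ O)ᶜ, ENNReal.ofReal (|g t x| ^ 2 / t) ∂μ
        = ∫⁻ x in (highDensitySet μ O)ᶜ, μ (ball x t) * coneDensity g t x ∂μ := by
          rw [← lintegral_const_mul' _ _ hc]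
          exact lintegral_congr fun x => (measure_ball_mul_coneDensity μ g ht x).symm
      _ ≤ ∫⁻ x in (highDensitySet μ O)ᶜ, 2 * (μ (ball x t ∩ Oᶜ) * coneDensity g t x) ∂μ := by
          refine setLIntegral_mono' hF fun x hx => ?_
          rw [← mul_assoc]
          gcongr
          exact measure_ball_le_two_mul_measure_inter_compl μ hO hx ht
      _ ≤ 2 * ∫⁻ y, μ (ball y t ∩ Oᶜ) * coneDensity g t y ∂μ := by
          rw [lintegral_const_mul' _ _ ofNat_ne_top]
          gcongr
          exact Measure.restrict_le_self
  rw [ENNReal.mul_le_iff_le_inv (measure_ball_pos μ 0 one_pos).ne' hc] at key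
  exact key.trans_eq (by ring)

theorem measure_lt_verticalEnergy_le (hg : Measurable (uncurry g)) {b : ℝ≥0∞} (hb0 : b ≠ 0)
    (hb : b ≠ ⊤) :
    μ {x | b < verticalEnergy g x} ≤ 2 * 4 ^ finrank ℝ E * μ {x | b < conicalEnergy μ g x} +
      2 * (μ (ball 0 1))⁻¹ * b⁻¹ *
        ∫⁻ x in {x | conicalEnergy μ g x ≤ b}, conicalEnergy μ g x ∂μ := by
  set O := {x | b < conicalEnergy μ g x}
  have hO : MeasurableSet O := measurableSet_lt measurable_const (measurable_conicalEnergy μ hg)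
  have hOc : Oᶜ = {x | conicalEnergy μ g x ≤ b} := by simp only [O, compl_ofPred, not_lt]
  set F := (highDensitySet μ O)ᶜ
  have hF : MeasurableSet F := (isOpen_highDensitySet μ O).measurableSet.compl
  have hmarkov : μ (F ∩ {x | b < verticalEnergy g x}) ≤ b⁻¹ * ∫⁻ x in F, verticalEnergy g x ∂μ :=
    calc μ (F ∩ {x | b < verticalEnergy g x}) ≤ μ.restrict F {x | b ≤ verticalEnergy g x} := by
          rw [Measure.restrict_apply' hF]
          exact measure_mono fun x hx => ⟨(show b < verticalEnergy g x from hx.2).le, hx.1⟩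
      _ ≤ (∫⁻ x in F, verticalEnergy g x ∂μ) / b :=
          meas_ge_le_lintegral_div (measurable_verticalEnergy hg).aemeasurable hb0 hb
      _ = b⁻¹ * ∫⁻ x in F, verticalEnergy g x ∂μ := by rw [div_eq_mul_inv, mul_comm]
  calc μ {x | b < verticalEnergy g x}
      ≤ μ (highDensitySet μ O) + μ (F ∩ {x | b < verticalEnergy g x}) := by
        refine (measure_mono fun x hx => ?_).trans (measure_union_le _ _)
        by_cases hxO : x ∈ highDensitySet μ O
        · exact Or.inl hxO
        · exact Or.inr ⟨hxO, hx⟩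
    _ ≤ 2 * 4 ^ finrank ℝ E * μ O +
        b⁻¹ * (2 * (μ (ball 0 1))⁻¹ * ∫⁻ x in Oᶜ, conicalEnergy μ g x ∂μ) := by
        gcongr
        · exact measure_highDensitySet_le μ hO
        · exact hmarkov.trans (by gcongr; exact setLIntegral_verticalEnergy_le μ hg hO)
    _ = _ := by rw [hOc]; ring

theorem lintegral_verticalEnergy_le (hg : Measurable (uncurry g)) :
    ∫⁻ x, verticalEnergy g x ∂μ ≤ 2 * (μ (ball 0 1))⁻¹ * ∫⁻ x, conicalEnergy μ g x ∂μ := by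
  simpa using setLIntegral_verticalEnergy_le μ hg MeasurableSet.empty

theorem lintegral_verticalEnergy_rpow_le (hg : Measurable (uncurry g)) {q : ℝ} (hq : 0 < q)
    (hq1 : q < 1) :
    ∫⁻ x, verticalEnergy g x ^ q ∂μ ≤
      (2 * 4 ^ finrank ℝ E + 2 * (μ (ball 0 1))⁻¹ * ENNReal.ofReal (q / (1 - q))) *
        ∫⁻ x, conicalEnergy μ g x ^ q ∂μ :=
  lintegral_rpow_le_of_goodLambda (measurable_verticalEnergy hg) (measurable_conicalEnergy μ hg)
    (fun _ hb0 hb => measure_lt_verticalEnergy_le μ hg hb0 hb) hq hq1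

theorem exists_lintegral_verticalEnergy_rpow_le {q : ℝ} (hq : 0 < q) (hq1 : q ≤ 1) :
    ∃ K : ℝ≥0∞, K ≠ ⊤ ∧ ∀ g : ℝ → E → ℝ, Measurable (uncurry g) →
      ∫⁻ x, verticalEnergy g x ^ q ∂μ ≤ K * ∫⁻ x, conicalEnergy μ g x ^ q ∂μ := by
  have hc : (μ (ball (0 : E) 1))⁻¹ ≠ ⊤ := ENNReal.inv_ne_top.2 (measure_ball_pos μ 0 one_pos).ne'
  rcases hq1.lt_or_eq with hq1 | rfl
  · exact ⟨2 * 4 ^ finrank ℝ E + 2 * (μ (ball 0 1))⁻¹ * ENNReal.ofReal (q / (1 - q)),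
      by finiteness, fun g hg => lintegral_verticalEnergy_rpow_le μ hg hq hq1⟩
  · exact ⟨2 * (μ (ball 0 1))⁻¹, by finiteness, fun g hg => by
      simpa only [ENNReal.rpow_one] using lintegral_verticalEnergy_le μ hg⟩

end SquareFunctions

lemma rpow_one_div_two_rpow (u : ℝ≥0∞) (p : ℝ) : (u ^ (1 / 2 : ℝ)) ^ p = u ^ (p / 2) := by
  rw [← ENNReal.rpow_mul]
  ring_nf

lemma vertNorm_eq (n : ℕ) (p : ℝ) (g : ℝ → En n → ℝ) :
    vertNorm n p g = (∫⁻ x, verticalEnergy g x ^ (p / 2)) ^ (1 / p) := by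
  simp only [vertNorm, vertSq, verticalEnergy, rpow_one_div_two_rpow]

lemma tentNorm_one_eq (n : ℕ) (p : ℝ) (g : ℝ → En n → ℝ) :
    tentNorm n p 1 g = (∫⁻ x, conicalEnergy volume g x ^ (p / 2)) ^ (1 / p) := by
  unfold tentNorm conicalSq conicalEnergy coneDensity
  simp only [one_mul, finrank_euclideanSpace_fin, rpow_one_div_two_rpow]

/-- (Corollary, case `p ≤ 2`.) There is `C = C(n,p) > 0` such that
`‖Vg‖_p ≤ C ‖g‖_{T^{p,2}_1}` for all locally square integrable `g`. -/
theorem statement9 (n : ℕ) (hn : 1 ≤ n) (p : ℝ) (hp : 0 < p) (hp2 : p ≤ 2) :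
    ∃ C : ℝ, 0 < C ∧ ∀ g : ℝ → En n → ℝ, LocSqInt n g →
      vertNorm n p g ≤ ENNReal.ofReal C * tentNorm n p 1 g := by
  have : Nonempty (Fin n) := ⟨⟨0, hn⟩⟩
  obtain ⟨K, hK, hKg⟩ := exists_lintegral_verticalEnergy_rpow_le (volume : Measure (En n))
    (half_pos hp) (by linarith : p / 2 ≤ 1)
  have hKp : K ^ (1 / p) ≠ ⊤ := ENNReal.rpow_ne_top_of_nonneg (by positivity) hK
  refine ⟨(K ^ (1 / p)).toReal + 1, by positivity, fun g hg => ?_⟩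
  rw [vertNorm_eq, tentNorm_one_eq]
  calc (∫⁻ x, verticalEnergy g x ^ (p / 2)) ^ (1 / p)
      ≤ (K * ∫⁻ x, conicalEnergy volume g x ^ (p / 2)) ^ (1 / p) := by
        gcongr
        exact hKg g hg.1
    _ = K ^ (1 / p) * (∫⁻ x, conicalEnergy volume g x ^ (p / 2)) ^ (1 / p) :=
        ENNReal.mul_rpow_of_nonneg _ _ (by positivity)
    _ ≤ ENNReal.ofReal ((K ^ (1 / p)).toReal + 1) *
          (∫⁻ x, conicalEnergy volume g x ^ (p / 2)) ^ (1 / p) := by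
        gcongr
        exact (ENNReal.le_ofReal_iff_toReal_le hKp (by positivity)).2 (by linarith)

end
end

section
/- Let n ≥ 1 and 0 < p < ∞. There is a constant c > 0 depending only on n and p such that for every α ≥ 1 there exists a locally square integrable function g on (0,∞)×ℝⁿ with 0 < ‖g‖_{T^{p,2}_1} < ∞ and ‖g‖_{T^{p,2}_α} ≥ c α^{n/p} ‖g‖_{T^{p,2}_1}. (Consequently the growth α^{n/p} in the change-of-aperture inequality cannot be improved; in particular α^{n/τ} with τ = min(p,2) is optimal when p ≤ 2.) -/
open MeasureTheory Metric Set Filter ENNReal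

noncomputable section

/-! The indicator `g` of the box `(2,3) × B(0,1)` works. If `|x| < α` with `α ≥ 1`, the whole box
lies in the cone `{|y - x| < α t}`, so `A^{(α)} g (x) = m^{1/2}` with `m = ∫∫ |g|² t^{-n} dy dt/t`.
On the other hand `A^{(1)} g ≤ m^{1/2}` everywhere and `A^{(1)} g = 0` off `B(0,4)`. Hence
`‖g‖_{T_α} ≥ m^{1/2} |B(0,α)|^{1/p}` and `‖g‖_{T_1} ≤ m^{1/2} |B(0,4)|^{1/p}`; the two volumes
differ by the factor `(α/4)^n`, so `c = 4^{-n/p}`. -/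

section LpBounds

variable {X : Type*} [MeasurableSpace X] {μ : Measure X} {f : X → ℝ≥0∞} {s : Set X}
  {C : ℝ≥0∞} {p : ℝ}

lemma mul_measure_rpow_le_lintegral_rpow (hp : 0 < p) (hs : MeasurableSet s)
    (hf : ∀ x ∈ s, C ≤ f x) :
    C * μ s ^ (1 / p) ≤ (∫⁻ x, f x ^ p ∂μ) ^ (1 / p) := by
  calc C * μ s ^ (1 / p) = (∫⁻ _ in s, C ^ p ∂μ) ^ (1 / p) := by
        rw [setLIntegral_const, ENNReal.mul_rpow_of_nonneg _ _ (by positivity),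
          ← ENNReal.rpow_mul, mul_one_div_cancel hp.ne', ENNReal.rpow_one]
    _ ≤ (∫⁻ x in s, f x ^ p ∂μ) ^ (1 / p) :=
        ENNReal.rpow_le_rpow
          (setLIntegral_mono' hs fun x hx => ENNReal.rpow_le_rpow (hf x hx) hp.le) (by positivity)
    _ ≤ (∫⁻ x, f x ^ p ∂μ) ^ (1 / p) := by gcongr; exact Measure.restrict_le_self

lemma lintegral_rpow_rpow_le_mul_measure (hp : 0 < p) (hs : MeasurableSet s)
    (hf : ∀ x, f x ≤ C) (hf_zero : ∀ x ∉ s, f x = 0) :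
    (∫⁻ x, f x ^ p ∂μ) ^ (1 / p) ≤ C * μ s ^ (1 / p) := by
  have hfp : ∀ x, f x ^ p ≤ s.indicator (fun _ => C ^ p) x := fun x => by
    by_cases hx : x ∈ s
    · simpa [hx] using ENNReal.rpow_le_rpow (hf x) hp.le
    · simp [hx, hf_zero x hx, ENNReal.zero_rpow_of_pos hp]
  calc (∫⁻ x, f x ^ p ∂μ) ^ (1 / p) ≤ (C ^ p * μ s) ^ (1 / p) := by
        rw [← lintegral_indicator_const hs]
        gcongr with x
        exact hfp x
    _ = C * μ s ^ (1 / p) := by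
        rw [ENNReal.mul_rpow_of_nonneg _ _ (by positivity), ← ENNReal.rpow_mul,
          mul_one_div_cancel hp.ne', ENNReal.rpow_one]

end LpBounds

lemma volume_ball_rpow_eq {n : ℕ} (x : En n) {r : ℝ} (hr : 0 < r) (p : ℝ) :
    volume (ball x r) ^ (1 / p) =
      ENNReal.ofReal (r ^ ((n : ℝ) / p)) * volume (ball (0 : En n) 1) ^ (1 / p) := by
  rw [Measure.addHaar_ball_of_pos volume x hr, finrank_euclideanSpace_fin,
    ENNReal.mul_rpow_of_ne_top ENNReal.ofReal_ne_top measure_ball_lt_top.ne,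
    ENNReal.ofReal_rpow_of_pos (by positivity), ← Real.rpow_natCast, ← Real.rpow_mul hr.le,
    mul_one_div]

/-- `∫∫ |g(t,y)|² t^{-n} dy dt/t`, the square of the conical square function of infinite
aperture. -/
def weightedSqIntegral (n : ℕ) (g : ℝ → En n → ℝ) : ℝ≥0∞ :=
  ∫⁻ t in Ioi (0 : ℝ), ∫⁻ y, ENNReal.ofReal (|g t y| ^ 2 / t ^ (n + 1))

section Conical

variable {n : ℕ} {α : ℝ} {g : ℝ → En n → ℝ} {x : En n}

lemma conicalSq_le_weightedSqIntegral :
    conicalSq n α g x ≤ weightedSqIntegral n g ^ (1 / 2 : ℝ) := by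
  unfold conicalSq weightedSqIntegral
  gcongr with t y
  exact indicator_le_self _ _ y

lemma conicalSq_eq_of_forall_mem_ball
    (h : ∀ t > 0, ∀ y, g t y ≠ 0 → y ∈ ball x (α * t)) :
    conicalSq n α g x = weightedSqIntegral n g ^ (1 / 2 : ℝ) := by
  unfold conicalSq weightedSqIntegral
  congr 1
  refine setLIntegral_congr_fun measurableSet_Ioi fun t ht => lintegral_congr fun y => ?_
  by_cases hy : y ∈ ball x (α * t)
  · exact indicator_of_mem hy _
  · have hg : g t y = 0 := by_contra fun hg => hy (h t ht y hg)
    simp [indicator_of_notMem hy, hg]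

lemma conicalSq_eq_zero_of_forall_mem_ball
    (h : ∀ t > 0, ∀ y ∈ ball x (α * t), g t y = 0) :
    conicalSq n α g x = 0 := by
  unfold conicalSq
  rw [setLIntegral_congr_fun (g := fun _ => 0) measurableSet_Ioi fun t ht => ?_]
  · simp
  refine (lintegral_congr fun y => ?_).trans lintegral_zero
  by_cases hy : y ∈ ball x (α * t)
  · simp [indicator_of_mem hy, h t ht y hy]
  · exact indicator_of_notMem hy _

end Conical

def box (n : ℕ) : Set (ℝ × En n) := Ioo (2 : ℝ) 3 ×ˢ ball (0 : En n) 1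

def boxIndicator (n : ℕ) : ℝ → En n → ℝ := fun t y => (box n).indicator 1 (t, y)

section Box

variable {n : ℕ} {p t α : ℝ} {x y : En n}

lemma measurableSet_box (n : ℕ) : MeasurableSet (box n) :=
  measurableSet_Ioo.prod measurableSet_ball

lemma volume_box_lt_top (n : ℕ) : volume (box n) < ⊤ := by
  rw [box, Measure.volume_eq_prod, Measure.prod_prod, Real.volume_Ioo]
  exact ENNReal.mul_lt_top ENNReal.ofReal_lt_top measure_ball_lt_top

lemma mem_box_of_boxIndicator_ne_zero (h : boxIndicator n t y ≠ 0) : (t, y) ∈ box n :=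
  mem_of_indicator_ne_zero h

lemma mem_ball_of_mem_box (hα : 1 ≤ α) (hx : x ∈ ball 0 α) (h : (t, y) ∈ box n) :
    y ∈ ball x (α * t) := by
  obtain ⟨⟨ht, -⟩, hy⟩ := h
  rw [mem_ball] at hx hy ⊢
  calc dist y x ≤ dist y 0 + dist x 0 := dist_triangle_right _ _ _
    _ < α * t := by nlinarith

lemma notMem_ball_of_mem_box (hx : x ∉ ball 0 4) (h : (t, y) ∈ box n) :
    y ∉ ball x (1 * t) := by
  obtain ⟨⟨-, ht⟩, hy⟩ := h
  intro hyx
  rw [mem_ball] at hy hyx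
  exact hx (mem_ball.2 (by linarith [dist_triangle_left x 0 y]))

lemma conicalSq_boxIndicator_of_mem_ball (hα : 1 ≤ α) (hx : x ∈ ball 0 α) :
    conicalSq n α (boxIndicator n) x = weightedSqIntegral n (boxIndicator n) ^ (1 / 2 : ℝ) :=
  conicalSq_eq_of_forall_mem_ball fun _ _ _ h =>
    mem_ball_of_mem_box hα hx (mem_box_of_boxIndicator_ne_zero h)

lemma conicalSq_one_boxIndicator_of_notMem_ball (hx : x ∉ ball 0 4) :
    conicalSq n 1 (boxIndicator n) x = 0 :=
  conicalSq_eq_zero_of_forall_mem_ball fun _ _ _ hy => by_contra fun h =>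
    notMem_ball_of_mem_box hx (mem_box_of_boxIndicator_ne_zero h) hy

lemma lintegral_boxIndicator_slice (t : ℝ) :
    ∫⁻ y, ENNReal.ofReal (|boxIndicator n t y| ^ 2 / t ^ (n + 1)) =
      (Ioo 2 3).indicator
        (fun t => ENNReal.ofReal (1 / t ^ (n + 1)) * volume (ball (0 : En n) 1)) t := by
  by_cases ht : t ∈ Ioo 2 3
  · rw [indicator_of_mem ht, ← lintegral_indicator_const measurableSet_ball]
    refine lintegral_congr fun y => ?_
    by_cases hy : y ∈ ball (0 : En n) 1
    · simp [boxIndicator, box, indicator_of_mem, ht, hy]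
    · simp [boxIndicator, box, indicator_of_notMem, hy]
  · simp [boxIndicator, box, indicator_of_notMem, ht]

lemma weightedSqIntegral_boxIndicator :
    weightedSqIntegral n (boxIndicator n) =
      ∫⁻ t in Ioo 2 3, ENNReal.ofReal (1 / t ^ (n + 1)) * volume (ball (0 : En n) 1) := by
  simp_rw [weightedSqIntegral, lintegral_boxIndicator_slice]
  rw [setLIntegral_indicator measurableSet_Ioo,
    inter_eq_left.2 (Ioo_subset_Ioi_self.trans (Ioi_subset_Ioi zero_le_two))]

lemma weightedSqIntegral_boxIndicator_pos : 0 < weightedSqIntegral n (boxIndicator n) := by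
  rw [weightedSqIntegral_boxIndicator]
  have hV : volume (ball (0 : En n) 1) ≠ 0 := (measure_ball_pos _ _ one_pos).ne'
  calc (0 : ℝ≥0∞) < ENNReal.ofReal (1 / 3 ^ (n + 1)) * volume (ball (0 : En n) 1) *
        volume (Ioo (2 : ℝ) 3) :=
        ENNReal.mul_pos (mul_ne_zero (ENNReal.ofReal_pos.2 (by positivity)).ne' hV)
          (by norm_num [Real.volume_Ioo])
    _ = ∫⁻ _ in Ioo 2 3, ENNReal.ofReal (1 / 3 ^ (n + 1)) * volume (ball (0 : En n) 1) :=
        (setLIntegral_const _ _).symm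
    _ ≤ ∫⁻ t in Ioo 2 3, ENNReal.ofReal (1 / t ^ (n + 1)) * volume (ball (0 : En n) 1) :=
        setLIntegral_mono' measurableSet_Ioo fun t ht => by
          have : (0 : ℝ) < t := lt_trans two_pos ht.1
          gcongr
          exact ht.2.le

lemma weightedSqIntegral_boxIndicator_lt_top : weightedSqIntegral n (boxIndicator n) < ⊤ := by
  rw [weightedSqIntegral_boxIndicator]
  calc ∫⁻ t in Ioo 2 3, ENNReal.ofReal (1 / t ^ (n + 1)) * volume (ball (0 : En n) 1)
      ≤ ∫⁻ _ in Ioo 2 3, volume (ball (0 : En n) 1) :=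
        setLIntegral_mono' measurableSet_Ioo fun t ht => by
          refine mul_le_of_le_one_left' (ENNReal.ofReal_le_one.2 ?_)
          rw [div_le_one (by have := ht.1; positivity)]
          exact one_le_pow₀ (by linarith [ht.1])
    _ < ⊤ := by
        rw [setLIntegral_const, Real.volume_Ioo]
        exact ENNReal.mul_lt_top measure_ball_lt_top ENNReal.ofReal_lt_top

lemma locSqInt_boxIndicator (n : ℕ) : LocSqInt n (boxIndicator n) := by
  refine ⟨measurable_one.indicator (measurableSet_box n), ?_⟩
  have hsq : (fun q : ℝ × En n => boxIndicator n q.1 q.2 ^ 2) = (box n).indicator 1 := by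
    funext q
    by_cases hq : q ∈ box n <;> simp [boxIndicator, hq]
  rw [hsq]
  refine ((integrable_indicator_iff (measurableSet_box n)).2 ?_).locallyIntegrable
    |>.locallyIntegrableOn _
  exact integrableOn_const (volume_box_lt_top n).ne

lemma ofReal_rpow_mul_le_tentNorm_boxIndicator (hp : 0 < p) (hα : 1 ≤ α) :
    ENNReal.ofReal (α ^ ((n : ℝ) / p)) * (weightedSqIntegral n (boxIndicator n) ^ (1 / 2 : ℝ) *
      volume (ball (0 : En n) 1) ^ (1 / p)) ≤ tentNorm n p α (boxIndicator n) := by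
  rw [mul_left_comm, ← volume_ball_rpow_eq 0 (one_pos.trans_le hα)]
  exact mul_measure_rpow_le_lintegral_rpow hp measurableSet_ball fun _ hx =>
    (conicalSq_boxIndicator_of_mem_ball hα hx).ge

lemma tentNorm_one_boxIndicator_le (hp : 0 < p) :
    tentNorm n p 1 (boxIndicator n) ≤
      ENNReal.ofReal (4 ^ ((n : ℝ) / p)) *
        (weightedSqIntegral n (boxIndicator n) ^ (1 / 2 : ℝ) *
          volume (ball (0 : En n) 1) ^ (1 / p)) := by
  rw [mul_left_comm, ← volume_ball_rpow_eq 0 four_pos]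
  exact lintegral_rpow_rpow_le_mul_measure hp measurableSet_ball
    (fun _ => conicalSq_le_weightedSqIntegral) fun _ hx =>
    conicalSq_one_boxIndicator_of_notMem_ball hx

end Box

theorem statement13_general (n : ℕ) (p : ℝ) (hp : 0 < p) :
    ∃ c : ℝ, 0 < c ∧ ∀ α : ℝ, 1 ≤ α →
      ∃ g : ℝ → En n → ℝ, LocSqInt n g ∧
        0 < tentNorm n p 1 g ∧ tentNorm n p 1 g < ⊤ ∧
        ENNReal.ofReal (c * α ^ ((n : ℝ) / p)) * tentNorm n p 1 g ≤ tentNorm n p α g := by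
  set m := weightedSqIntegral n (boxIndicator n) ^ (1 / 2 : ℝ) *
    volume (ball (0 : En n) 1) ^ (1 / p)
  have hm_pos : 0 < m := ENNReal.mul_pos
    (ENNReal.rpow_pos weightedSqIntegral_boxIndicator_pos
      weightedSqIntegral_boxIndicator_lt_top.ne).ne'
    (ENNReal.rpow_pos (measure_ball_pos _ _ one_pos) measure_ball_lt_top.ne).ne'
  have hm_lt_top : m < ⊤ := ENNReal.mul_lt_top
    (ENNReal.rpow_lt_top_of_nonneg (by norm_num) weightedSqIntegral_boxIndicator_lt_top.ne)
    (ENNReal.rpow_lt_top_of_nonneg (by positivity) measure_ball_lt_top.ne)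
  have lower (α : ℝ) (hα : 1 ≤ α) := ofReal_rpow_mul_le_tentNorm_boxIndicator (n := n) hp hα
  have upper := tentNorm_one_boxIndicator_le (n := n) hp
  refine ⟨4 ^ (-((n : ℝ) / p)), by positivity, fun α hα =>
    ⟨boxIndicator n, locSqInt_boxIndicator n, ?_, ?_, ?_⟩⟩
  · exact hm_pos.trans_le <| by
      simpa only [Real.one_rpow, ENNReal.ofReal_one, one_mul] using lower 1 le_rfl
  · exact upper.trans_lt (ENNReal.mul_lt_top ENNReal.ofReal_lt_top hm_lt_top)
  · calc _ ≤ ENNReal.ofReal (4 ^ (-((n : ℝ) / p)) * α ^ ((n : ℝ) / p)) *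
          (ENNReal.ofReal (4 ^ ((n : ℝ) / p)) * m) := by gcongr
      _ = ENNReal.ofReal (α ^ ((n : ℝ) / p)) * m := by
        rw [← mul_assoc, ← ENNReal.ofReal_mul (by positivity), mul_right_comm,
          Real.rpow_neg zero_le_four, inv_mul_cancel₀ (by positivity), one_mul]
      _ ≤ tentNorm n p α (boxIndicator n) := lower α hα

/-- (Sharpness: the growth `α^{n/p}` is attained.) There is `c = c(n,p) > 0`
such that for every `α ≥ 1` there is a locally square integrable `g` with
`0 < ‖g‖_{T^{p,2}_1} < ∞` and `‖g‖_{T^{p,2}_α} ≥ c α^{n/p} ‖g‖_{T^{p,2}_1}`. -/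
theorem statement13 (n : ℕ) (hn : 1 ≤ n) (p : ℝ) (hp : 0 < p) :
    ∃ c : ℝ, 0 < c ∧ ∀ α : ℝ, 1 ≤ α →
      ∃ g : ℝ → En n → ℝ, LocSqInt n g ∧
        0 < tentNorm n p 1 g ∧ tentNorm n p 1 g < ⊤ ∧
        ENNReal.ofReal (c * α ^ ((n : ℝ) / p)) * tentNorm n p 1 g ≤ tentNorm n p α g :=
  statement13_general n p hp
end
end

section
/- Let n ≥ 1 and 0 < p < ∞. There is a constant c > 0 depending only on n and p such that for every α ≥ 2 there exists a locally square integrable function g on (0,∞)×ℝⁿ with 0 < ‖g‖_{T^{p,2}_1} < ∞ and ‖g‖_{T^{p,2}_α} ≥ c α^{n/2} ‖g‖_{T^{p,2}_1}. (Consequently the growth α^{n/2} cannot be improved; in particular α^{n/τ} with τ = min(p,2) is optimal when p ≥ 2.) -/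
open MeasureTheory Metric Set Filter ENNReal

noncomputable section

/- For `g` the indicator of `(1,2) × B(0,4α)`, each slice `t ∈ (1,2)` of the cone of aperture `1`
over `x` meets the support of `g` in a subset of `B(x,2)`, and only when `x ∈ B(0,4α+2) ⊆ B(0,5α)`;
the cone of aperture `α` over any `x ∈ B(0,2α)` contains `(1,2) × B(x,α)`. Hence
`‖g‖_{T^{p,2}_1} ≲ |B(0,2)|^{1/2} |B(0,5α)|^{1/p}` and
`‖g‖_{T^{p,2}_α} ≳ |B(0,α)|^{1/2} |B(0,2α)|^{1/p}`: the supports have comparable volume, and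
`|B(0,α)| / |B(0,2)| = (α/2)^n`. -/

section LpOfIndicator

variable {X : Type*} [MeasurableSpace X] {μ : Measure X} {p : ℝ}

theorem lintegral_rpow_indicator_const_rpow {S : Set X} (hS : MeasurableSet S) (C : ℝ≥0∞)
    (hp : 0 < p) : (∫⁻ x, S.indicator (fun _ => C) x ^ p ∂μ) ^ (1 / p) = C * μ S ^ (1 / p) := by
  have hpow : (fun x => S.indicator (fun _ => C) x ^ p) = S.indicator (fun _ => C ^ p) := by
    funext x
    by_cases hx : x ∈ S <;> simp [hx, ENNReal.zero_rpow_of_pos hp]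
  rw [hpow, lintegral_indicator_const hS, ENNReal.mul_rpow_of_nonneg _ _ (by positivity),
    ← ENNReal.rpow_mul, mul_one_div_cancel hp.ne', ENNReal.rpow_one]

theorem lintegral_rpow_rpow_le_of_le_indicator {f : X → ℝ≥0∞} {S : Set X}
    (hS : MeasurableSet S) {C : ℝ≥0∞} (hp : 0 < p) (hf : ∀ x, f x ≤ S.indicator (fun _ => C) x) :
    (∫⁻ x, f x ^ p ∂μ) ^ (1 / p) ≤ C * μ S ^ (1 / p) := by
  rw [← lintegral_rpow_indicator_const_rpow hS C hp]
  gcongr with x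
  exact hf x

theorem le_lintegral_rpow_rpow_of_indicator_le {f : X → ℝ≥0∞} {S : Set X}
    (hS : MeasurableSet S) {C : ℝ≥0∞} (hp : 0 < p) (hf : ∀ x, S.indicator (fun _ => C) x ≤ f x) :
    C * μ S ^ (1 / p) ≤ (∫⁻ x, f x ^ p ∂μ) ^ (1 / p) := by
  rw [← lintegral_rpow_indicator_const_rpow hS C hp]
  gcongr with x
  exact hf x

end LpOfIndicator

theorem measure_ball_eq_ofReal_div_pow_mul {E : Type*} [NormedAddCommGroup E]
    [NormedSpace ℝ E] [MeasurableSpace E] [BorelSpace E] [FiniteDimensional ℝ E] (μ : Measure E)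
    [μ.IsAddHaarMeasure] (x : E) {r s : ℝ} (hr : 0 < r) (hs : 0 < s) :
    μ (ball x r) = ENNReal.ofReal ((r / s) ^ Module.finrank ℝ E) * μ (ball 0 s) := by
  rw [← Measure.addHaar_ball_mul_of_pos μ x (div_pos hr hs), div_mul_cancel₀ r hs.ne']

def slab (n : ℕ) (R : ℝ) : ℝ → En n → ℝ :=
  Function.curry ((Ioo (1 : ℝ) 2 ×ˢ ball (0 : En n) R).indicator 1)

theorem locSqInt_slab (n : ℕ) (R : ℝ) : LocSqInt n (slab n R) := by
  have hS : MeasurableSet (Ioo (1 : ℝ) 2 ×ˢ ball (0 : En n) R) :=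
    measurableSet_Ioo.prod measurableSet_ball
  refine ⟨by simpa [slab] using measurable_one.indicator hS, ?_⟩
  have hsq : (fun q : ℝ × En n => slab n R q.1 q.2 ^ 2)
      = (Ioo (1 : ℝ) 2 ×ˢ ball (0 : En n) R).indicator 1 := by
    funext q
    by_cases hq : q ∈ Ioo (1 : ℝ) 2 ×ˢ ball (0 : En n) R <;> simp [slab, hq]
  rw [hsq]
  refine (Integrable.locallyIntegrable ?_).locallyIntegrableOn _
  refine (integrable_indicator_iff hS).2 (integrableOn_const ?_)
  rw [Measure.volume_eq_prod, Measure.prod_prod, Real.volume_Ioo]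
  exact ENNReal.mul_ne_top ENNReal.ofReal_ne_top measure_ball_lt_top.ne

theorem conicalSq_slab (n : ℕ) (R α : ℝ) (x : En n) :
    conicalSq n α (slab n R) x = (∫⁻ t in Ioo (1 : ℝ) 2,
      ENNReal.ofReal (1 / t ^ (n + 1)) * volume (ball x (α * t) ∩ ball 0 R)) ^ (1 / 2 : ℝ) := by
  have hinner : ∀ t, (∫⁻ y, (ball x (α * t)).indicator
      (fun y => ENNReal.ofReal (|slab n R t y| ^ 2 / t ^ (n + 1))) y) = (Ioo (1 : ℝ) 2).indicator
      (fun t => ENNReal.ofReal (1 / t ^ (n + 1)) * volume (ball x (α * t) ∩ ball 0 R)) t := by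
    intro t
    by_cases ht : t ∈ Ioo (1 : ℝ) 2
    · rw [indicator_of_mem ht,
        ← lintegral_indicator_const (measurableSet_ball.inter measurableSet_ball)]
      congr 1 with y
      by_cases hy : y ∈ ball (0 : En n) R <;> by_cases hxy : y ∈ ball x (α * t) <;>
        simp [slab, ht, hy, hxy]
    · simp [slab, ht]
  unfold conicalSq
  simp_rw [hinner]
  rw [setLIntegral_indicator measurableSet_Ioo,
    inter_eq_left.2 (Ioo_subset_Ioi_self.trans (Ioi_subset_Ioi zero_le_one))]

theorem conicalSq_slab_le_indicator (n : ℕ) {R α ρ : ℝ} (hα : 0 ≤ α) (hρ : R + 2 * α ≤ ρ)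
    (x : En n) : conicalSq n α (slab n R) x ≤ (ball (0 : En n) ρ).indicator
      (fun _ => volume (ball (0 : En n) (2 * α)) ^ (1 / 2 : ℝ)) x := by
  rw [conicalSq_slab]
  by_cases hx : x ∈ ball (0 : En n) ρ
  · rw [indicator_of_mem hx]
    gcongr
    calc (∫⁻ t in Ioo (1 : ℝ) 2,
          ENNReal.ofReal (1 / t ^ (n + 1)) * volume (ball x (α * t) ∩ ball 0 R))
        ≤ ∫⁻ _ in Ioo (1 : ℝ) 2, volume (ball (0 : En n) (2 * α)) := by
          refine setLIntegral_mono' measurableSet_Ioo fun t ht => ?_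
          have hweight : ENNReal.ofReal (1 / t ^ (n + 1)) ≤ 1 :=
            ENNReal.ofReal_le_one.2 <| div_le_one_of_le₀ (one_le_pow₀ ht.1.le)
              (pow_nonneg (by linarith [ht.1]) _)
          have hball : ball x (α * t) ∩ ball 0 R ⊆ ball x (2 * α) :=
            inter_subset_left.trans (ball_subset_ball (by nlinarith [ht.2]))
          calc ENNReal.ofReal (1 / t ^ (n + 1)) * volume (ball x (α * t) ∩ ball 0 R)
              ≤ 1 * volume (ball x (2 * α)) := mul_le_mul' hweight (measure_mono hball)
            _ = volume (ball (0 : En n) (2 * α)) := by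
              rw [one_mul, Measure.addHaar_ball_center]
      _ = volume (ball (0 : En n) (2 * α)) := by norm_num
  · have hempty : ∀ t ∈ Ioo (1 : ℝ) 2, ball x (α * t) ∩ ball 0 R = ∅ := by
      intro t ht
      refine ball_disjoint_ball ?_ |>.inter_eq
      rw [mem_ball, not_lt] at hx
      nlinarith [ht.2]
    rw [indicator_of_notMem hx, setLIntegral_congr_fun measurableSet_Ioo
      fun t ht => by rw [hempty t ht, measure_empty, mul_zero]]
    simp

theorem indicator_le_conicalSq_slab (n : ℕ) {R α r : ℝ} (hα : 0 ≤ α) (hr : r + 2 * α ≤ R)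
    (x : En n) : (ball (0 : En n) r).indicator
      (fun _ => (ENNReal.ofReal (1 / 2 ^ (n + 1)) * volume (ball (0 : En n) α)) ^ (1 / 2 : ℝ)) x
      ≤ conicalSq n α (slab n R) x := by
  by_cases hx : x ∈ ball (0 : En n) r
  · rw [indicator_of_mem hx, conicalSq_slab]
    gcongr
    calc ENNReal.ofReal (1 / 2 ^ (n + 1)) * volume (ball (0 : En n) α)
        = ∫⁻ _ in Ioo (1 : ℝ) 2, ENNReal.ofReal (1 / 2 ^ (n + 1)) * volume (ball x α) := by
          norm_num [Measure.addHaar_ball_center]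
      _ ≤ ∫⁻ t in Ioo (1 : ℝ) 2,
          ENNReal.ofReal (1 / t ^ (n + 1)) * volume (ball x (α * t) ∩ ball 0 R) := by
          refine setLIntegral_mono' measurableSet_Ioo fun t ht => ?_
          have hball : ball x α ⊆ ball x (α * t) ∩ ball 0 R := by
            refine subset_inter (ball_subset_ball (le_mul_of_one_le_right hα ht.1.le)) ?_
            refine ball_subset_ball' ?_
            rw [mem_ball] at hx
            linarith
          have ht0 : 0 < t := one_pos.trans ht.1
          gcongr
          exact ht.2.le
  · simp [hx]

theorem slab_lower_bound_eq_mul_upper_bound (n : ℕ) {p α : ℝ} (hp : 0 < p) (hα : 0 < α) :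
    (ENNReal.ofReal (1 / 2 ^ (n + 1)) * volume (ball (0 : En n) α)) ^ (1 / 2 : ℝ)
        * volume (ball (0 : En n) (2 * α)) ^ (1 / p)
      = ENNReal.ofReal ((((1 : ℝ) / 2) ^ (2 * n + 1)) ^ (1 / 2 : ℝ)
          * (((2 : ℝ) / 5) ^ n) ^ (1 / p) * α ^ ((n : ℝ) / 2))
        * (volume (ball (0 : En n) 2) ^ (1 / 2 : ℝ)
          * volume (ball (0 : En n) (5 * α)) ^ (1 / p)) := by
  have hα2 := measure_ball_eq_ofReal_div_pow_mul volume (0 : En n) hα two_pos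
  have h2α := measure_ball_eq_ofReal_div_pow_mul volume (0 : En n) (by positivity : 0 < 2 * α)
    (by positivity : 0 < 5 * α)
  rw [finrank_euclideanSpace_fin] at hα2 h2α
  rw [hα2, h2α, ← mul_assoc, ← ENNReal.ofReal_mul (by positivity),
    ENNReal.mul_rpow_of_nonneg _ _ (by norm_num), ENNReal.mul_rpow_of_nonneg _ _ (by positivity),
    ENNReal.ofReal_rpow_of_nonneg (by positivity) (by norm_num),
    ENNReal.ofReal_rpow_of_nonneg (by positivity) (by positivity)]
  have hreal : (1 / 2 ^ (n + 1) * (α / 2) ^ n) ^ (1 / 2 : ℝ) * ((2 * α / (5 * α)) ^ n) ^ (1 / p)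
      = (((1 : ℝ) / 2) ^ (2 * n + 1)) ^ (1 / 2 : ℝ) * (((2 : ℝ) / 5) ^ n) ^ (1 / p)
          * α ^ ((n : ℝ) / 2) := by
    have hsplit : (1 : ℝ) / 2 ^ (n + 1) * (α / 2) ^ n
        = ((1 : ℝ) / 2) ^ (2 * n + 1) * α ^ n := by
      rw [div_pow, one_div_pow, show 2 * n + 1 = (n + 1) + n by ring, pow_add]
      field_simp
      ring
    rw [hsplit, Real.mul_rpow (by positivity) (by positivity), ← Real.rpow_natCast α n,
      ← Real.rpow_mul hα.le, mul_div_mul_right _ _ hα.ne']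
    ring_nf
  rw [← hreal, ENNReal.ofReal_mul (by positivity)]
  ring

theorem statement14_general (n : ℕ) (p : ℝ) (hp : 0 < p) :
    ∃ c : ℝ, 0 < c ∧ ∀ α : ℝ, 2 ≤ α →
      ∃ g : ℝ → En n → ℝ, LocSqInt n g ∧
        0 < tentNorm n p 1 g ∧ tentNorm n p 1 g < ⊤ ∧
        ENNReal.ofReal (c * α ^ ((n : ℝ) / 2)) * tentNorm n p 1 g ≤ tentNorm n p α g := by
  refine ⟨(((1 : ℝ) / 2) ^ (2 * n + 1)) ^ (1 / 2 : ℝ) * (((2 : ℝ) / 5) ^ n) ^ (1 / p),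
    by positivity, fun α hα => ?_⟩
  have hupper : tentNorm n p 1 (slab n (4 * α))
      ≤ volume (ball (0 : En n) (2 * 1)) ^ (1 / 2 : ℝ)
        * volume (ball (0 : En n) (5 * α)) ^ (1 / p) :=
    lintegral_rpow_rpow_le_of_le_indicator measurableSet_ball hp
      (conicalSq_slab_le_indicator n zero_le_one (by linarith))
  rw [mul_one] at hupper
  have hlower : ∀ β r, 0 < β → r + 2 * β ≤ 4 * α →
      (ENNReal.ofReal (1 / 2 ^ (n + 1)) * volume (ball (0 : En n) β)) ^ (1 / 2 : ℝ)
        * volume (ball (0 : En n) r) ^ (1 / p) ≤ tentNorm n p β (slab n (4 * α)) :=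
    fun β r hβ hr => le_lintegral_rpow_rpow_of_indicator_le measurableSet_ball hp
      (indicator_le_conicalSq_slab n hβ.le hr)
  refine ⟨slab n (4 * α), locSqInt_slab n _, ?_, hupper.trans_lt (by finiteness), ?_⟩
  · refine lt_of_lt_of_le ?_ (hlower 1 2 one_pos (by linarith))
    have hball : ∀ r : ℝ, 0 < r → volume (ball (0 : En n) r) ≠ 0 :=
      fun r hr => (measure_ball_pos _ _ hr).ne'
    refine ENNReal.mul_pos (ENNReal.rpow_pos ?_ (by finiteness)).ne'
      (ENNReal.rpow_pos (pos_iff_ne_zero.2 (hball 2 two_pos)) (by finiteness)).ne'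
    exact ENNReal.mul_pos (by simp) (hball 1 one_pos)
  · calc _ ≤ _ := by gcongr
      _ = _ := (slab_lower_bound_eq_mul_upper_bound n hp (by linarith)).symm
      _ ≤ _ := hlower α (2 * α) (by linarith) (by linarith)

/-- (Sharpness: the growth `α^{n/2}` is attained.) There is `c = c(n,p) > 0`
such that for every `α ≥ 2` there is a locally square integrable `g` with
`0 < ‖g‖_{T^{p,2}_1} < ∞` and `‖g‖_{T^{p,2}_α} ≥ c α^{n/2} ‖g‖_{T^{p,2}_1}`. -/
theorem statement14 (n : ℕ) (hn : 1 ≤ n) (p : ℝ) (hp : 0 < p) :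
    ∃ c : ℝ, 0 < c ∧ ∀ α : ℝ, 2 ≤ α →
      ∃ g : ℝ → En n → ℝ, LocSqInt n g ∧
        0 < tentNorm n p 1 g ∧ tentNorm n p 1 g < ⊤ ∧
        ENNReal.ofReal (c * α ^ ((n : ℝ) / 2)) * tentNorm n p 1 g ≤ tentNorm n p α g :=
  statement14_general n p hp

end
end

section
/- Let n ≥ 1, let B = B(0,1) be the open unit ball of ℝⁿ, let α ≥ 2, and let a₂(t,y) = 1_{T_1 B}(αt,y) · 1_{[1/2,1]}(αt). Then for every 0 < p < ∞ there exist constants 0 < c ≤ C < ∞ depending only on n and p (not on α) such that c α^{n/2} ≤ ‖a₂‖_{T^{p,2}_α} ≤ C α^{n/2} and c ≤ ‖a₂‖_{T^{p,2}_1} ≤ C. -/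
open MeasureTheory Metric Set Filter ENNReal

noncomputable section

/-- The example `a₁(t,y) = 1_{T_1 B(0,1)}(t,y) · 1_{[1/2,1]}(t)`. -/
def a1Fun (n : ℕ) : ℝ → En n → ℝ := fun t y =>
  (tent n 1 (0 : En n) 1).indicator (fun _ => (1 : ℝ)) (t, y) *
    (Set.Icc (1 / 2 : ℝ) 1).indicator (fun _ => (1 : ℝ)) t

/-! For `1/(2α) ≤ t < 1/α` the slice `a₂(t, ·)` is the indicator of `B(0, 1 - αt)`, and `a₂(t, ·) = 0`
for other `t`, so
`A^{(β)} a₂(x)² = ∫_{1/(2α)}^{1/α} |B(x, βt) ∩ B(0, 1 - αt)| dt / t^{n+1}`.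
Let `0 < β ≤ α`. Bounding the intersection by `B(x, βt)` gives `A^{(β)} a₂ ≲ β^{n/2}`, and the
intersection is empty unless `|x| < 1`. Conversely, for `|x| < 1/8` and `αt < 3/4` it contains
`B(x, β/(8α))`, so `A^{(β)} a₂ ≳ β^{n/2}` on `B(0, 1/8)`. The two estimates of the theorem are the
cases `β = α` and `β = 1`. -/

lemma mem_Ico_iff_of_pos {α t : ℝ} (hα : 0 < α) :
    t ∈ Ico (1 / (2 * α)) (1 / α) ↔ 1 / 2 ≤ α * t ∧ α * t < 1 := by
  rw [mem_Ico, div_le_iff₀ (by positivity), lt_div_iff₀ hα]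
  constructor <;> rintro ⟨h1, h2⟩ <;> constructor <;> linarith

lemma pow_mul_rpow_half {β K : ℝ} (hβ : 0 ≤ β) (hK : 0 ≤ K) (n : ℕ) :
    (β ^ n * K) ^ (1 / 2 : ℝ) = β ^ ((n : ℝ) / 2) * K ^ (1 / 2 : ℝ) := by
  rw [Real.mul_rpow (by positivity) hK, ← Real.rpow_natCast, ← Real.rpow_mul hβ]
  ring_nf

section
variable {n : ℕ}

lemma volume_ball_eq_ofReal (x : En n) {r : ℝ} (hr : 0 < r) :
    volume (ball x r) = ENNReal.ofReal (r ^ n * volume.real (ball (0 : En n) 1)) := by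
  rw [Measure.addHaar_ball_of_pos volume x hr, finrank_euclideanSpace_fin,
    ENNReal.ofReal_mul (by positivity), ofReal_measureReal measure_ball_lt_top.ne]

lemma tentNorm_le_of_le_indicator {p β : ℝ} (hp : 0 < p) {g : ℝ → En n → ℝ} {s : Set (En n)}
    (hs : MeasurableSet s) {M : ℝ≥0∞} (h : ∀ x, conicalSq n β g x ≤ s.indicator (fun _ => M) x) :
    tentNorm n p β g ≤ M * volume s ^ (1 / p) := by
  have hpow : ∀ x, conicalSq n β g x ^ p ≤ s.indicator (fun _ => M ^ p) x := by
    intro x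
    by_cases hx : x ∈ s
    · simpa [indicator_of_mem hx] using ENNReal.rpow_le_rpow (h x) hp.le
    · have h0 : conicalSq n β g x = 0 := by simpa [indicator_of_notMem hx] using h x
      simp [indicator_of_notMem hx, h0, ENNReal.zero_rpow_of_pos hp]
  calc tentNorm n p β g ≤ (∫⁻ x, s.indicator (fun _ => M ^ p) x) ^ (1 / p) := by
        unfold tentNorm; gcongr with x; exact hpow x
    _ = M * volume s ^ (1 / p) := by
        rw [lintegral_indicator_const hs, ENNReal.mul_rpow_of_nonneg _ _ (by positivity),
          ← ENNReal.rpow_mul, mul_one_div_cancel hp.ne', ENNReal.rpow_one]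

lemma le_tentNorm_of_le_on {p β : ℝ} (hp : 0 < p) {g : ℝ → En n → ℝ} {s : Set (En n)}
    (hs : MeasurableSet s) {m : ℝ≥0∞} (h : ∀ x ∈ s, m ≤ conicalSq n β g x) :
    m * volume s ^ (1 / p) ≤ tentNorm n p β g := by
  calc m * volume s ^ (1 / p) = (∫⁻ _ in s, m ^ p) ^ (1 / p) := by
        rw [setLIntegral_const, ENNReal.mul_rpow_of_nonneg _ _ (by positivity),
          ← ENNReal.rpow_mul, mul_one_div_cancel hp.ne', ENNReal.rpow_one]
    _ ≤ (∫⁻ x in s, conicalSq n β g x ^ p) ^ (1 / p) := by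
        gcongr 1
        exact setLIntegral_mono' hs fun x hx => ENNReal.rpow_le_rpow (h x hx) hp.le
    _ ≤ tentNorm n p β g := by
        unfold tentNorm; gcongr 1; exact setLIntegral_le_lintegral _ _

end

def a2Fun (n : ℕ) (α : ℝ) : ℝ → En n → ℝ := fun t y => a1Fun n (α * t) y

def a2ConicalDensity (n : ℕ) (α β : ℝ) (x : En n) (t : ℝ) : ℝ≥0∞ :=
  ENNReal.ofReal (1 / t ^ (n + 1)) * volume (ball x (β * t) ∩ ball 0 (1 - α * t))

section
variable {n : ℕ}

lemma a1Fun_eq_ite (s : ℝ) (y : En n) :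
    a1Fun n s y = if 1 / 2 ≤ s ∧ s < 1 ∧ ‖y‖ < 1 - s then 1 else 0 := by
  simp only [a1Fun, tent, indicator, mem_ofPred_eq, mem_Icc, mem_ball_zero_iff, div_one, one_mul,
    mul_ite, mul_one, mul_zero]
  split_ifs <;> grind

lemma ofReal_sq_a2Fun_div {α : ℝ} (hα : 0 < α) (t c : ℝ) (y : En n) :
    ENNReal.ofReal (|a2Fun n α t y| ^ 2 / c) =
      (Ico (1 / (2 * α)) (1 / α)).indicator
        (fun t => (ball 0 (1 - α * t)).indicator (fun _ => ENNReal.ofReal (1 / c)) y) t := by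
  simp only [a2Fun, a1Fun_eq_ite, indicator, mem_Ico_iff_of_pos hα, mem_ball_zero_iff]
  split_ifs <;> first | (exfalso; tauto) | norm_num

lemma lintegral_ball_a2Fun {α : ℝ} (hα : 0 < α) (β t : ℝ) (x : En n) :
    ∫⁻ y, (ball x (β * t)).indicator
        (fun y => ENNReal.ofReal (|a2Fun n α t y| ^ 2 / t ^ (n + 1))) y =
      (Ico (1 / (2 * α)) (1 / α)).indicator (a2ConicalDensity n α β x) t := by
  simp_rw [ofReal_sq_a2Fun_div hα]
  by_cases ht : t ∈ Ico (1 / (2 * α)) (1 / α)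
  · simp only [indicator_of_mem ht, indicator_indicator]
    exact lintegral_indicator_const (measurableSet_ball.inter measurableSet_ball) _
  · simp only [indicator_of_notMem ht, indicator_zero, lintegral_zero]

lemma conicalSq_a2Fun {α : ℝ} (hα : 0 < α) (β : ℝ) (x : En n) :
    conicalSq n β (a2Fun n α) x =
      (∫⁻ t in Ico (1 / (2 * α)) (1 / α), a2ConicalDensity n α β x t) ^ (1 / 2 : ℝ) := by
  have hsub : Ico (1 / (2 * α)) (1 / α) ⊆ Ioi 0 := fun t ht => lt_of_lt_of_le (by positivity) ht.1
  simp_rw [conicalSq, lintegral_ball_a2Fun hα, setLIntegral_indicator measurableSet_Ico,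
    inter_eq_left.2 hsub]

lemma a2ConicalDensity_le {α β t : ℝ} (hα : 0 < α) (hβ : 0 < β)
    (ht : t ∈ Ico (1 / (2 * α)) (1 / α)) (x : En n) :
    a2ConicalDensity n α β x t ≤
      ENNReal.ofReal (2 * α * (β ^ n * volume.real (ball (0 : En n) 1))) := by
  have ht0 : 0 < t := lt_of_lt_of_le (by positivity) ht.1
  have h1t : 1 / t ≤ 2 * α := by
    rw [div_le_iff₀ ht0]; linarith [((mem_Ico_iff_of_pos hα).1 ht).1]
  calc a2ConicalDensity n α β x t ≤ ENNReal.ofReal (1 / t ^ (n + 1)) * volume (ball x (β * t)) :=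
        mul_le_mul_right (measure_mono inter_subset_left) _
    _ = ENNReal.ofReal (1 / t * (β ^ n * volume.real (ball (0 : En n) 1))) := by
        rw [volume_ball_eq_ofReal x (by positivity), ← ENNReal.ofReal_mul (by positivity)]
        congr 1; field_simp; ring
    _ ≤ _ := by gcongr

lemma a2ConicalDensity_eq_zero {α β t : ℝ} (hβα : β ≤ α) (ht : 0 ≤ t) {x : En n}
    (hx : 1 ≤ ‖x‖) : a2ConicalDensity n α β x t = 0 := by
  have hdisj : Disjoint (ball x (β * t)) (ball (0 : En n) (1 - α * t)) :=
    ball_disjoint_ball (by rw [dist_zero_right]; nlinarith)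
  rw [a2ConicalDensity, hdisj.inter_eq, measure_empty, mul_zero]

lemma le_a2ConicalDensity {α β t : ℝ} (hβ : 0 < β) (hβα : β ≤ α)
    (ht : t ∈ Ico (1 / (2 * α)) (3 / (4 * α))) {x : En n} (hx : ‖x‖ < 1 / 8) :
    ENNReal.ofReal (α * (β ^ n * volume.real (ball (0 : En n) 1) / 8 ^ n)) ≤
      a2ConicalDensity n α β x t := by
  have hα : 0 < α := hβ.trans_le hβα
  obtain ⟨ht₁, ht₂⟩ := ht
  rw [div_le_iff₀ (by positivity)] at ht₁
  rw [lt_div_iff₀ (by positivity)] at ht₂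
  have ht0 : 0 < t := by nlinarith
  set ρ := β / (8 * α)
  have hρ : ρ ≤ 1 / 8 := by rw [div_le_iff₀ (by positivity)]; linarith
  have hρt : ρ ≤ β * t := by rw [div_le_iff₀ (by positivity)]; nlinarith
  have hsub : ball x ρ ⊆ ball x (β * t) ∩ ball 0 (1 - α * t) := by
    intro y hy
    refine ⟨ball_subset_ball hρt hy, ?_⟩
    have := dist_triangle y x 0
    rw [mem_ball] at hy ⊢
    simp only [dist_zero_right] at this ⊢
    linarith
  have hpow : α ^ (n + 1) ≤ 1 / t ^ (n + 1) := by
    rw [le_div_iff₀ (by positivity), ← mul_pow]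
    exact pow_le_one₀ (by positivity) (by linarith)
  calc ENNReal.ofReal (α * (β ^ n * volume.real (ball (0 : En n) 1) / 8 ^ n))
      = ENNReal.ofReal (α ^ (n + 1) * (ρ ^ n * volume.real (ball (0 : En n) 1))) := by
        congr 1; rw [div_pow, mul_pow, pow_succ]; field_simp
    _ ≤ ENNReal.ofReal (1 / t ^ (n + 1)) * volume (ball x ρ) := by
        rw [volume_ball_eq_ofReal x (by positivity), ← ENNReal.ofReal_mul (by positivity)]
        gcongr
    _ ≤ a2ConicalDensity n α β x t := mul_le_mul_right (measure_mono hsub) _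

lemma conicalSq_a2Fun_le {α β : ℝ} (hα : 0 < α) (hβ : 0 < β) (x : En n) :
    conicalSq n β (a2Fun n α) x ≤
      ENNReal.ofReal (β ^ ((n : ℝ) / 2) * volume.real (ball (0 : En n) 1) ^ (1 / 2 : ℝ)) := by
  set V := volume.real (ball (0 : En n) 1)
  have hint : ∫⁻ t in Ico (1 / (2 * α)) (1 / α), a2ConicalDensity n α β x t ≤
      ENNReal.ofReal (β ^ n * V) := by
    calc _ ≤ ∫⁻ _ in Ico (1 / (2 * α)) (1 / α), ENNReal.ofReal (2 * α * (β ^ n * V)) :=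
          setLIntegral_mono' measurableSet_Ico fun t ht => a2ConicalDensity_le hα hβ ht x
      _ = ENNReal.ofReal (β ^ n * V) := by
          rw [setLIntegral_const, Real.volume_Ico, ← ENNReal.ofReal_mul (by positivity)]
          congr 1; field_simp; ring
  rw [conicalSq_a2Fun hα, ← pow_mul_rpow_half hβ.le measureReal_nonneg,
    ← ENNReal.ofReal_rpow_of_nonneg (by positivity) (by norm_num)]
  gcongr

lemma conicalSq_a2Fun_eq_zero {α β : ℝ} (hα : 0 < α) (hβα : β ≤ α) {x : En n} (hx : 1 ≤ ‖x‖) :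
    conicalSq n β (a2Fun n α) x = 0 := by
  rw [conicalSq_a2Fun hα, setLIntegral_congr_fun measurableSet_Ico fun t ht =>
      a2ConicalDensity_eq_zero hβα (le_trans (by positivity) ht.1) hx,
    lintegral_zero, ENNReal.zero_rpow_of_pos (by norm_num)]

lemma le_conicalSq_a2Fun {α β : ℝ} (hβ : 0 < β) (hβα : β ≤ α) {x : En n} (hx : ‖x‖ < 1 / 8) :
    ENNReal.ofReal (β ^ ((n : ℝ) / 2) *
        (volume.real (ball (0 : En n) 1) / (4 * 8 ^ n)) ^ (1 / 2 : ℝ)) ≤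
      conicalSq n β (a2Fun n α) x := by
  set V := volume.real (ball (0 : En n) 1)
  have hα : 0 < α := hβ.trans_le hβα
  have hint : ENNReal.ofReal (β ^ n * (V / (4 * 8 ^ n))) ≤
      ∫⁻ t in Ico (1 / (2 * α)) (1 / α), a2ConicalDensity n α β x t := by
    calc ENNReal.ofReal (β ^ n * (V / (4 * 8 ^ n)))
        = ∫⁻ _ in Ico (1 / (2 * α)) (3 / (4 * α)), ENNReal.ofReal (α * (β ^ n * V / 8 ^ n)) := by
          rw [setLIntegral_const, Real.volume_Ico, ← ENNReal.ofReal_mul (by positivity)]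
          congr 1; field_simp; ring
      _ ≤ ∫⁻ t in Ico (1 / (2 * α)) (3 / (4 * α)), a2ConicalDensity n α β x t :=
          setLIntegral_mono' measurableSet_Ico fun t ht => le_a2ConicalDensity hβ hβα ht hx
      _ ≤ _ := lintegral_mono_set (Ico_subset_Ico_right
          (by rw [div_le_div_iff₀ (by positivity) hα]; linarith))
  rw [conicalSq_a2Fun hα, ← pow_mul_rpow_half hβ.le (by positivity),
    ← ENNReal.ofReal_rpow_of_nonneg (by positivity) (by norm_num)]
  gcongr

lemma tentNorm_a2Fun_le {p α β : ℝ} (hp : 0 < p) (hβ : 0 < β) (hβα : β ≤ α) :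
    tentNorm n p β (a2Fun n α) ≤ ENNReal.ofReal
      (volume.real (ball (0 : En n) 1) ^ (1 / 2 : ℝ) * volume.real (ball (0 : En n) 1) ^ (1 / p) *
        β ^ ((n : ℝ) / 2)) := by
  have hα : 0 < α := hβ.trans_le hβα
  have hbound : ∀ x, conicalSq n β (a2Fun n α) x ≤ (ball 0 1).indicator (fun _ => ENNReal.ofReal
      (β ^ ((n : ℝ) / 2) * volume.real (ball (0 : En n) 1) ^ (1 / 2 : ℝ))) x := by
    intro x
    by_cases hx : x ∈ ball (0 : En n) 1
    · rw [indicator_of_mem hx]; exact conicalSq_a2Fun_le hα hβ x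
    · rw [indicator_of_notMem hx, conicalSq_a2Fun_eq_zero hα hβα (by simpa using hx)]
  refine (tentNorm_le_of_le_indicator hp measurableSet_ball hbound).trans_eq ?_
  rw [← ofReal_measureReal measure_ball_lt_top.ne,
    ENNReal.ofReal_rpow_of_nonneg measureReal_nonneg (by positivity),
    ← ENNReal.ofReal_mul (by positivity)]
  ring_nf

lemma le_tentNorm_a2Fun {p α β : ℝ} (hp : 0 < p) (hβ : 0 < β) (hβα : β ≤ α) :
    ENNReal.ofReal ((volume.real (ball (0 : En n) 1) / (4 * 8 ^ n)) ^ (1 / 2 : ℝ) *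
        ((1 / 8) ^ n * volume.real (ball (0 : En n) 1)) ^ (1 / p) * β ^ ((n : ℝ) / 2)) ≤
      tentNorm n p β (a2Fun n α) := by
  refine le_trans (le_of_eq ?_) (le_tentNorm_of_le_on hp measurableSet_ball
    (s := ball 0 (1 / 8)) fun x hx => le_conicalSq_a2Fun hβ hβα (by simpa using hx))
  rw [volume_ball_eq_ofReal 0 (by norm_num),
    ENNReal.ofReal_rpow_of_nonneg (by positivity) (by positivity),
    ← ENNReal.ofReal_mul (by positivity)]
  ring_nf

end

theorem statement16_general (n : ℕ) (p : ℝ) (hp : 0 < p) :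
    ∃ c C : ℝ, 0 < c ∧ c ≤ C ∧
      ∀ α : ℝ, 2 ≤ α →
        (ENNReal.ofReal (c * α ^ ((n : ℝ) / 2)) ≤
            tentNorm n p α (fun t y => a1Fun n (α * t) y) ∧
          tentNorm n p α (fun t y => a1Fun n (α * t) y) ≤
            ENNReal.ofReal (C * α ^ ((n : ℝ) / 2))) ∧
        (ENNReal.ofReal c ≤ tentNorm n p 1 (fun t y => a1Fun n (α * t) y) ∧
          tentNorm n p 1 (fun t y => a1Fun n (α * t) y) ≤ ENNReal.ofReal C) := by
  set V := volume.real (ball (0 : En n) 1)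
  have hV : 0 < V := ENNReal.toReal_pos (measure_ball_pos _ _ one_pos).ne' measure_ball_lt_top.ne
  -- `c ≤ C` is read off from the two bounds at `α = β = 1`
  have hcC := (le_tentNorm_a2Fun (n := n) hp one_pos le_rfl).trans
    (tentNorm_a2Fun_le hp one_pos le_rfl)
  rw [Real.one_rpow, mul_one, mul_one, ENNReal.ofReal_le_ofReal_iff (by positivity)] at hcC
  refine ⟨_, _, by positivity, hcC, fun α hα => ⟨⟨le_tentNorm_a2Fun hp (by linarith) le_rfl,
    tentNorm_a2Fun_le hp (by linarith) le_rfl⟩, ?_⟩⟩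
  have h1 : (1 : ℝ) ≤ α := by linarith
  have hlower := le_tentNorm_a2Fun (n := n) hp one_pos h1
  have hupper := tentNorm_a2Fun_le (n := n) hp one_pos h1
  rw [Real.one_rpow, mul_one] at hlower hupper
  exact ⟨hlower, hupper⟩

/-- For `a₂(t,y) = a₁(αt, y)`, one has `‖a₂‖_{T^{p,2}_α} ∼ α^{n/2}` and
`‖a₂‖_{T^{p,2}_1} ∼ 1` for `α ≥ 2`, with comparability constants depending only on `n, p`. -/
theorem statement16 (n : ℕ) (hn : 1 ≤ n) (p : ℝ) (hp : 0 < p) :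
    ∃ c C : ℝ, 0 < c ∧ c ≤ C ∧
      ∀ α : ℝ, 2 ≤ α →
        (ENNReal.ofReal (c * α ^ ((n : ℝ) / 2)) ≤
            tentNorm n p α (fun t y => a1Fun n (α * t) y) ∧
          tentNorm n p α (fun t y => a1Fun n (α * t) y) ≤
            ENNReal.ofReal (C * α ^ ((n : ℝ) / 2))) ∧
        (ENNReal.ofReal c ≤ tentNorm n p 1 (fun t y => a1Fun n (α * t) y) ∧
          tentNorm n p 1 (fun t y => a1Fun n (α * t) y) ≤ ENNReal.ofReal C) :=
  statement16_general n p hp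

end
end

section
/- Let n ≥ 1 and let g be a continuous function with compact support contained in (0,∞)×ℝⁿ. Then for every x ∈ ℝⁿ, α^{-n/2} A^{(α)}g(x) converges, as α → 0⁺, to ωₙ^{1/2} Vg(x), where ωₙ is the Lebesgue measure of the unit ball of ℝⁿ. -/
open MeasureTheory Metric Set Filter ENNReal

noncomputable section

/-!
For each `t > 0`, `|B(x, αt)| = ωₙ (αt)ⁿ`, so `α⁻ⁿ ∫_{B(x,αt)} |g(t,y)|² dy` is `ωₙ tⁿ` times the
average of `|g(t,·)|²` over a shrinking ball, which tends to `ωₙ tⁿ |g(t,x)|²` by continuity.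
Since `g` is bounded and vanishes for `t` outside a compact subset `K` of `(0,∞)`, these
`t`-integrands are dominated by `C 1_K(t) / t`, so dominated convergence gives
`α⁻ⁿ A^{(α)}g(x)² → ωₙ Vg(x)²`; then take square roots.
-/

open scoped Topology
open Module

lemma eventually_ball_subset_of_mem_nhds {X : Type*} [PseudoMetricSpace X] {x : X} {s : Set X}
    (hs : s ∈ 𝓝 x) : ∀ᶠ r in 𝓝[>] (0 : ℝ), 0 < r ∧ ball x r ⊆ s := by
  obtain ⟨δ, hδ, hδs⟩ := Metric.mem_nhds_iff.1 hs
  filter_upwards [Ioo_mem_nhdsGT hδ] with r hr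
  exact ⟨hr.1, (ball_subset_ball hr.2.le).trans hδs⟩

section BallAverage

variable {X : Type*} [PseudoMetricSpace X] [ProperSpace X] [MeasurableSpace X]
  [OpensMeasurableSpace X] (μ : Measure X) [μ.IsOpenPosMeasure] [IsFiniteMeasureOnCompacts μ]

theorem ContinuousAt.tendsto_inv_measure_ball_mul_setLIntegral {f : X → ℝ≥0∞} {x : X}
    (hf : ContinuousAt f x) :
    Tendsto (fun r => (μ (ball x r))⁻¹ * ∫⁻ y in ball x r, f y ∂μ) (𝓝[>] 0) (𝓝 (f x)) := by
  refine tendsto_order.2 ⟨fun a ha => ?_, fun a ha => ?_⟩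
  · obtain ⟨b, hab, hbf⟩ := exists_between ha
    filter_upwards [eventually_ball_subset_of_mem_nhds (hf.eventually (lt_mem_nhds hbf))]
      with r ⟨hr, hball⟩
    refine hab.trans_le ?_
    rw [← ENNReal.mul_le_iff_le_inv (measure_ball_pos μ x hr).ne' measure_ball_lt_top.ne,
      mul_comm, ← setLIntegral_const]
    exact setLIntegral_mono' measurableSet_ball fun y hy => (hball hy).le
  · obtain ⟨b, hfb, hba⟩ := exists_between ha
    filter_upwards [eventually_ball_subset_of_mem_nhds (hf.eventually (gt_mem_nhds hfb))]
      with r ⟨hr, hball⟩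
    refine lt_of_le_of_lt ?_ hba
    rw [ENNReal.inv_mul_le_iff (measure_ball_pos μ x hr).ne' measure_ball_lt_top.ne,
      mul_comm, ← setLIntegral_const]
    exact setLIntegral_mono' measurableSet_ball fun y hy => (hball hy).le

end BallAverage

section HaarBall

variable {E : Type*} [NormedAddCommGroup E] [NormedSpace ℝ E] [FiniteDimensional ℝ E]
  [MeasurableSpace E] [BorelSpace E] (μ : Measure E) [μ.IsAddHaarMeasure]

lemma ofReal_rpow_neg_mul_addHaar_ball {α t : ℝ} (hα : 0 < α) (ht : 0 < t) (x : E) :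
    ENNReal.ofReal (α ^ (-(finrank ℝ E : ℝ))) * μ (ball x (α * t)) =
      ENNReal.ofReal (t ^ finrank ℝ E) * μ (ball 0 1) := by
  rw [Measure.addHaar_ball_of_pos μ x (mul_pos hα ht), ← mul_assoc,
    ← ENNReal.ofReal_mul (by positivity), Real.rpow_neg hα.le, Real.rpow_natCast, mul_pow,
    inv_mul_cancel_left₀ (pow_ne_zero _ hα.ne')]

lemma rpow_neg_mul_setLIntegral_ball_le {f : E → ℝ≥0∞} {x : E} {α t : ℝ} {c : ℝ≥0∞}
    (hα : 0 < α) (ht : 0 < t) (hfc : ∀ y ∈ ball x (α * t), f y ≤ c) :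
    ENNReal.ofReal (α ^ (-(finrank ℝ E : ℝ))) * ∫⁻ y in ball x (α * t), f y ∂μ ≤
      ENNReal.ofReal (t ^ finrank ℝ E) * μ (ball 0 1) * c := by
  calc ENNReal.ofReal (α ^ (-(finrank ℝ E : ℝ))) * ∫⁻ y in ball x (α * t), f y ∂μ
      ≤ ENNReal.ofReal (α ^ (-(finrank ℝ E : ℝ))) * ∫⁻ _ in ball x (α * t), c ∂μ :=
        mul_le_mul_right (setLIntegral_mono' measurableSet_ball hfc) _
    _ = ENNReal.ofReal (t ^ finrank ℝ E) * μ (ball 0 1) * c := by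
        rw [setLIntegral_const, mul_comm c, ← mul_assoc, ofReal_rpow_neg_mul_addHaar_ball μ hα ht]

theorem ContinuousAt.tendsto_rpow_neg_mul_setLIntegral_ball {f : E → ℝ≥0∞} {x : E}
    (hf : ContinuousAt f x) {t : ℝ} (ht : 0 < t) :
    Tendsto (fun α : ℝ => ENNReal.ofReal (α ^ (-(finrank ℝ E : ℝ))) *
        ∫⁻ y in ball x (α * t), f y ∂μ) (𝓝[>] 0)
      (𝓝 (ENNReal.ofReal (t ^ finrank ℝ E) * μ (ball 0 1) * f x)) := by
  have hscale : Tendsto (· * t) (𝓝[>] (0 : ℝ)) (𝓝[>] 0) :=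
    tendsto_nhdsWithin_of_tendsto_nhds_of_eventually_within _
      (((continuous_mul_const t).tendsto' 0 0 (zero_mul t)).mono_left nhdsWithin_le_nhds)
      (eventually_nhdsWithin_of_forall fun α (hα : 0 < α) => mul_pos hα ht)
  refine (ENNReal.Tendsto.const_mul
    ((hf.tendsto_inv_measure_ball_mul_setLIntegral μ).comp hscale)
    (Or.inr (ENNReal.mul_ne_top ENNReal.ofReal_ne_top measure_ball_lt_top.ne))).congr' ?_
  filter_upwards [self_mem_nhdsWithin] with α (hα : 0 < α)
  have hball := measure_ball_pos μ x (mul_pos hα ht)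
  rw [Function.comp_apply, ← ofReal_rpow_neg_mul_addHaar_ball μ hα ht x, mul_assoc,
    ← mul_assoc (μ _), ENNReal.mul_inv_cancel hball.ne' measure_ball_lt_top.ne, one_mul]

end HaarBall

lemma measurable_setLIntegral_ball {X : Type*} [PseudoMetricSpace X] [MeasurableSpace X]
    [OpensMeasurableSpace X] (μ : Measure X) [SFinite μ] {G : ℝ → X → ℝ≥0∞}
    (hG : Measurable (Function.uncurry G)) (x : X) (α : ℝ) :
    Measurable fun t => ∫⁻ y in ball x (α * t), G t y ∂μ := by
  have hS : MeasurableSet {p : ℝ × X | dist p.2 x < α * p.1} :=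
    measurableSet_lt ((continuous_id.dist continuous_const).measurable.comp measurable_snd)
      (measurable_const.mul measurable_fst)
  simp_rw [← lintegral_indicator measurableSet_ball]
  exact (hG.indicator hS).lintegral_prod_right'

lemma ofReal_pow_mul_mul_ofReal_div_pow_succ (n : ℕ) (c : ℝ≥0∞) {t : ℝ} (ht : 0 < t) (a : ℝ) :
    ENNReal.ofReal (t ^ n) * c * ENNReal.ofReal (a / t ^ (n + 1)) = c * ENNReal.ofReal (a / t) := by
  rw [mul_right_comm, ← ENNReal.ofReal_mul (by positivity), mul_comm]
  congr 2
  field_simp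
  ring

section Slice

variable {n : ℕ} {u : En n → ℝ} {α t : ℝ}

lemma rpow_neg_mul_setLIntegral_sq_div_pow_le {M : ℝ} (hα : 0 < α) (ht : 0 < t)
    (hM : ∀ y, |u y| ≤ M) (x : En n) :
    ENNReal.ofReal (α ^ (-(n : ℝ))) *
        ∫⁻ y in ball x (α * t), ENNReal.ofReal (|u y| ^ 2 / t ^ (n + 1)) ≤
      volume (ball (0 : En n) 1) * ENNReal.ofReal (M ^ 2 / t) := by
  have h := rpow_neg_mul_setLIntegral_ball_le volume hα ht
    (f := fun y => ENNReal.ofReal (|u y| ^ 2 / t ^ (n + 1))) (x := x)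
    (c := ENNReal.ofReal (M ^ 2 / t ^ (n + 1))) fun y _ => by gcongr; exact hM y
  rwa [finrank_euclideanSpace_fin, ofReal_pow_mul_mul_ofReal_div_pow_succ n _ ht] at h

theorem Continuous.tendsto_rpow_neg_mul_setLIntegral_sq_div_pow (hu : Continuous u) (ht : 0 < t)
    (x : En n) :
    Tendsto (fun α : ℝ => ENNReal.ofReal (α ^ (-(n : ℝ))) *
        ∫⁻ y in ball x (α * t), ENNReal.ofReal (|u y| ^ 2 / t ^ (n + 1))) (𝓝[>] 0)
      (𝓝 (volume (ball (0 : En n) 1) * ENNReal.ofReal (|u x| ^ 2 / t))) := by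
  have hf : Continuous fun y => ENNReal.ofReal (|u y| ^ 2 / t ^ (n + 1)) :=
    ENNReal.continuous_ofReal.comp ((hu.abs.pow 2).div_const _)
  have h := hf.continuousAt.tendsto_rpow_neg_mul_setLIntegral_ball volume (x := x) ht
  rwa [finrank_euclideanSpace_fin, ofReal_pow_mul_mul_ofReal_div_pow_succ n _ ht] at h

end Slice

theorem tendsto_rpow_neg_mul_lintegral_cone (n : ℕ) (g : ℝ → En n → ℝ)
    (hc : Continuous (Function.uncurry g)) (hs : HasCompactSupport (Function.uncurry g))
    (hsub : tsupport (Function.uncurry g) ⊆ Set.Ioi (0 : ℝ) ×ˢ (Set.univ : Set (En n)))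
    (x : En n) :
    Tendsto (fun α : ℝ => ENNReal.ofReal (α ^ (-(n : ℝ))) * ∫⁻ t in Ioi 0,
        ∫⁻ y in ball x (α * t), ENNReal.ofReal (|g t y| ^ 2 / t ^ (n + 1)))
      (𝓝[>] 0) (𝓝 (volume (ball (0 : En n) 1) * ∫⁻ t in Ioi 0, ENNReal.ofReal (|g t x| ^ 2 / t))) := by
  set ω := volume (ball (0 : En n) 1)
  have hω : ω ≠ ∞ := measure_ball_lt_top.ne
  obtain ⟨M, hM⟩ := hs.exists_bound_of_continuous hc
  set K := Prod.fst '' tsupport (Function.uncurry g)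
  have hK : IsCompact K := hs.image continuous_fst
  have hK_pos : K ⊆ Ioi 0 := by
    rintro _ ⟨p, hp, rfl⟩
    exact (hsub hp).1
  have hg_zero : ∀ t ∉ K, ∀ y, g t y = 0 := fun t ht y =>
    by_contra fun h => ht ⟨(t, y), subset_tsupport _ h, rfl⟩
  suffices Tendsto (fun α : ℝ => ∫⁻ t in Ioi 0, ENNReal.ofReal (α ^ (-(n : ℝ))) *
      ∫⁻ y in ball x (α * t), ENNReal.ofReal (|g t y| ^ 2 / t ^ (n + 1)))
      (𝓝[>] 0) (𝓝 (∫⁻ t in Ioi 0, ω * ENNReal.ofReal (|g t x| ^ 2 / t))) by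
    simpa only [lintegral_const_mul' _ _ ENNReal.ofReal_ne_top,
      lintegral_const_mul' _ _ hω] using this
  refine tendsto_lintegral_filter_of_dominated_convergence
    (K.indicator fun t => ω * ENNReal.ofReal (M ^ 2 / t)) ?_ ?_ ?_ ?_
  · have hG : Measurable (Function.uncurry fun t y => ENNReal.ofReal (|g t y| ^ 2 / t ^ (n + 1))) :=
      ENNReal.measurable_ofReal.comp ((hc.abs.pow 2).measurable.div (measurable_fst.pow_const _))
    exact Eventually.of_forall fun α => (measurable_setLIntegral_ball volume hG x α).const_mul _
  · filter_upwards [self_mem_nhdsWithin] with α (hα : 0 < α)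
    refine (ae_restrict_iff' measurableSet_Ioi).2 (Eventually.of_forall fun t (ht : 0 < t) => ?_)
    by_cases htK : t ∈ K
    · rw [indicator_of_mem htK]
      exact rpow_neg_mul_setLIntegral_sq_div_pow_le hα ht (fun y => hM (t, y)) x
    · simp [indicator_of_notMem htK, hg_zero t htK]
  · refine ne_top_of_le_ne_top ?_ (setLIntegral_le_lintegral _ _)
    rw [lintegral_indicator hK.measurableSet, lintegral_const_mul' _ _ hω]
    refine ENNReal.mul_ne_top hω
      ((ContinuousOn.integrableOn_compact hK ?_).lintegral_lt_top.ne)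
    exact continuousOn_const.div continuousOn_id fun t ht => (hK_pos ht).ne'
  · refine (ae_restrict_iff' measurableSet_Ioi).2 (Eventually.of_forall fun t (ht : 0 < t) => ?_)
    exact (hc.comp (Continuous.prodMk_right t)).tendsto_rpow_neg_mul_setLIntegral_sq_div_pow ht x

theorem statement17_general (n : ℕ) (g : ℝ → En n → ℝ)
    (hc : Continuous (Function.uncurry g)) (hs : HasCompactSupport (Function.uncurry g))
    (hsub : tsupport (Function.uncurry g) ⊆ Set.Ioi (0 : ℝ) ×ˢ (Set.univ : Set (En n)))
    (x : En n) :
    Filter.Tendsto (fun α : ℝ => ENNReal.ofReal (α ^ (-(n : ℝ) / 2)) * conicalSq n α g x)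
      (nhdsWithin 0 (Set.Ioi 0))
      (nhds (volume (ball (0 : En n) 1) ^ (1 / 2 : ℝ) * vertSq n g x)) := by
  have h := (tendsto_rpow_neg_mul_lintegral_cone n g hc hs hsub x).ennrpow_const (1 / 2 : ℝ)
  rw [ENNReal.mul_rpow_of_nonneg _ _ (by norm_num)] at h
  refine h.congr' ?_
  filter_upwards [self_mem_nhdsWithin] with α (hα : 0 < α)
  simp only [conicalSq, lintegral_indicator measurableSet_ball]
  rw [ENNReal.mul_rpow_of_nonneg _ _ (by norm_num), ENNReal.ofReal_rpow_of_pos (by positivity),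
    ← Real.rpow_mul hα.le, mul_one_div, neg_div]

/-- For `g` continuous with compact support contained in `(0,∞) × ℝⁿ`,
`α^{-n/2} A^{(α)} g(x) → ωₙ^{1/2} V g(x)` as `α → 0⁺`, for every `x ∈ ℝⁿ`,
where `ωₙ` is the volume of the unit ball of `ℝⁿ`. -/
theorem statement17 (n : ℕ) (hn : 1 ≤ n) (g : ℝ → En n → ℝ)
    (hc : Continuous (Function.uncurry g)) (hs : HasCompactSupport (Function.uncurry g))
    (hsub : tsupport (Function.uncurry g) ⊆ Set.Ioi (0 : ℝ) ×ˢ (Set.univ : Set (En n)))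
    (x : En n) :
    Filter.Tendsto (fun α : ℝ => ENNReal.ofReal (α ^ (-(n : ℝ) / 2)) * conicalSq n α g x)
      (nhdsWithin 0 (Set.Ioi 0))
      (nhds (volume (ball (0 : En n) 1) ^ (1 / 2 : ℝ) * vertSq n g x)) :=
  statement17_general n g hc hs hsub x

end
end
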